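/- arXiv:1605.06632 — 11 statements merged into one kernel-verified Lean document; each statement's English description precedes it below -/
import Mathlib

section
/- For every positive integer n, the alternating sum ∑_{k=0}^{n} (-1)^k * C(n,k) * C(n+k,k) equals (-1)^n. -/
open Polynomial

/- The sum is the value at `1` of the shifted Legendre polynomial `Pₙ`. The symmetry
`Pₙ(x) = (-1)ⁿ Pₙ(1 - x)` reduces this to `(-1)ⁿ Pₙ(0)`, and `Pₙ(0) = 1` is its constant term. -/

variable {R : Type*} [Ring R]

theorem Polynomial.aeval_shiftedLegendre (n : ℕ) (x : R) :
    aeval x (shiftedLegendre n) =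
      ∑ k ∈ Finset.range (n + 1), (-1) ^ k * n.choose k * (n + k).choose k * x ^ k := by
  simp [shiftedLegendre, Nat.choose_symm_add (a := n)]

theorem Polynomial.aeval_zero_shiftedLegendre (n : ℕ) : aeval (0 : R) (shiftedLegendre n) = 1 := by
  simp [aeval_shiftedLegendre, Finset.sum_range_succ']

theorem Polynomial.aeval_one_shiftedLegendre (n : ℕ) :
    aeval (1 : R) (shiftedLegendre n) = (-1) ^ n := by
  simpa [aeval_zero_shiftedLegendre] using shiftedLegendre_eval_symm n (1 : R)

theorem alternating_sum_binom_general (n : ℕ) :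
    ∑ k ∈ Finset.range (n + 1),
      (-1 : ℤ) ^ k * (Nat.choose n k) * (Nat.choose (n + k) k) = (-1 : ℤ) ^ n := by
  simpa [aeval_shiftedLegendre] using aeval_one_shiftedLegendre (R := ℤ) n

theorem alternating_sum_binom (n : ℕ) (hn : 0 < n) :
    ∑ k ∈ Finset.range (n + 1),
      (-1 : ℤ) ^ k * (Nat.choose n k) * (Nat.choose (n + k) k) = (-1 : ℤ) ^ n :=
  alternating_sum_binom_general n
end

section
/- For every positive integer n, ∑_{k=1}^{n} (-1)^k * C(n,k) * C(n+k,k) * H_k = 2 * (-1)^n * H_n, where H_k = ∑_{i=1}^{k} 1/i is the k-th harmonic number. -/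
/-!
In any binomial ring, Chu–Vandermonde together with the upper negation
`C(-(n+1), k) = (-1)^k C(n+k, k)` gives
`∑ₖ (-1)^k C(n+k, k) C(x+n, n-k) = C(x-1, n)`.
Evaluating at `x = ε` in the dual numbers `ℚ[ε]` reads off the value and the derivative at `0`.
Since `C(x+n, n-k) = (x+n)⋯(x+k+1)/(n-k)!`, its logarithmic derivative at `0` is `H_n - H_k`,
while that of `C(x-1, n)` is `-H_n`. Hence `∑ₖ aₖ = (-1)^n` and `∑ₖ aₖ (H_n - H_k) = -(-1)^n H_n`
for `aₖ = (-1)^k C(n,k) C(n+k,k)`, and `∑ₖ aₖ H_k = H_n ∑ₖ aₖ - ∑ₖ aₖ (H_n - H_k) = 2 (-1)^n H_n`.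
-/

open Finset Polynomial DualNumber TrivSqZeroExt

namespace Ring

variable {R : Type*} [Ring R] [BinomialRing R]

theorem choose_neg_one (n : ℕ) : choose (-1 : R) n = (-1) ^ n := by
  rw [choose_neg, add_sub_cancel_left, choose_natCast, Nat.choose_self, Int.negOnePow_def,
    Units.smul_def]
  simp

theorem choose_neg_natCast_add_one (n k : ℕ) :
    choose (-((n + 1 : ℕ) : R)) k = (-1) ^ k * ((n + k).choose k : R) := by
  rw [choose_neg, show ((n + 1 : ℕ) : R) + k - 1 = ((n + k : ℕ) : R) by push_cast; abel,
    choose_natCast, Int.negOnePow_def, Units.smul_def]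
  simp

theorem choose_sub_one_eq_sum (r : R) (n : ℕ) :
    choose (r - 1) n =
      ∑ k ∈ range (n + 1), (-1) ^ k * ((n + k).choose k : R) * choose (r + n) (n - k) := by
  have hr : r - 1 = -((n + 1 : ℕ) : R) + (r + n) := by push_cast; abel
  rw [hr, add_choose_eq n (Nat.cast_commute (n + 1) (r + n)).neg_left,
    Nat.sum_antidiagonal_eq_sum_range_succ_mk]
  simp only [choose_neg_natCast_add_one]

theorem choose_eq_inv_factorial_smul_prod {K A : Type*} [Field K] [CharZero K] [CommRing A]
    [Algebra K A] [BinomialRing A] (x : A) (m : ℕ) :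
    choose x m = (m.factorial : K)⁻¹ • ∏ i ∈ range m, (x - i) := by
  rw [← descPochhammer_eval_eq_prod_range, ← descPochhammer_map (algebraMap ℤ A),
    ← eval₂_eq_eval_map, ← aeval_def, aeval_eq_smeval, descPochhammer_eq_factorial_smul_choose,
    ← Nat.cast_smul_eq_nsmul K, inv_smul_smul₀ (by exact_mod_cast m.factorial_ne_zero)]

end Ring

namespace DualNumber

variable {K : Type*} [Field K]

theorem prod_inl_add_eps {ι : Type*} (s : Finset ι) (f : ι → K) (hf : ∀ i ∈ s, f i ≠ 0) :
    ∏ i ∈ s, (inl (f i) + ε : K[ε]) = inl (∏ i ∈ s, f i) * (1 + inl (∑ i ∈ s, (f i)⁻¹) * ε) := by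
  classical
  induction s using Finset.induction_on with
  | empty => simp
  | insert j s hj ih =>
    rw [prod_insert hj, ih fun i hi => hf i (mem_insert_of_mem hi), prod_insert hj, sum_insert hj,
      inl_mul, inl_add]
    have hinv : (inl (f j) * inl (f j)⁻¹ : K[ε]) = 1 := by
      rw [← inl_mul, mul_inv_cancel₀ (hf j (mem_insert_self j s)), inl_one]
    linear_combination (inl (∏ i ∈ s, f i) * inl (∑ i ∈ s, (f i)⁻¹)) * (eps_mul_eps (R := K))
      - (inl (∏ i ∈ s, f i) * ε) * hinv

theorem choose_inl_add_eps [CharZero K] (a : K) (m : ℕ) (h : ∀ i < m, a ≠ i) :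
    Ring.choose (inl a + ε : K[ε]) m =
      inl (Ring.choose a m) * (1 + inl (∑ i ∈ range m, (a - i)⁻¹) * ε) := by
  rw [Ring.choose_eq_inv_factorial_smul_prod (K := K),
    Ring.choose_eq_inv_factorial_smul_prod (K := K)]
  have hsub : ∀ i ∈ range m, inl a + ε - (i : K[ε]) = inl (a - i) + ε := fun i _ => by
    rw [inl_sub, inl_natCast]; abel
  rw [prod_congr rfl hsub, prod_inl_add_eps _ _ fun i hi => sub_ne_zero.2 (h i (mem_range.1 hi)),
    inl_smul, smul_mul_assoc]

end DualNumber

theorem sum_range_inv_sub_eq_harmonic_sub {k n : ℕ} (hkn : k ≤ n) :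
    ∑ i ∈ range (n - k), ((n : ℚ) - i)⁻¹ = harmonic n - harmonic k := by
  obtain ⟨m, rfl⟩ := Nat.exists_eq_add_of_le hkn
  rw [Nat.add_sub_cancel_left]
  clear hkn
  induction m with
  | zero => simp
  | succ m ih =>
    rw [sum_range_succ', ← add_assoc, harmonic_succ]
    push_cast at ih ⊢
    simp only [add_sub_add_right_eq_sub, ih]
    ring

theorem sum_neg_one_pow_mul_choose_mul_choose_eps_harmonic (n : ℕ) :
    ∑ k ∈ range (n + 1), (inl ((-1 : ℚ) ^ k * n.choose k * (n + k).choose k) *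
        (1 + inl (harmonic n - harmonic k) * ε) : ℚ[ε])
      = inl ((-1) ^ n) * (1 - inl (harmonic n) * ε) := by
  have key := Ring.choose_sub_one_eq_sum (ε : ℚ[ε]) n
  have hlhs : Ring.choose (ε - 1 : ℚ[ε]) n = inl ((-1) ^ n) * (1 - inl (harmonic n) * ε) := by
    rw [show (ε - 1 : ℚ[ε]) = inl (-1) + ε by rw [inl_neg, inl_one]; abel,
      DualNumber.choose_inl_add_eps _ _ fun i _ => (neg_one_lt_zero.trans_le i.cast_nonneg).ne,
      Ring.choose_neg_one]
    have hsum : ∑ i ∈ range n, ((-1 : ℚ) - i)⁻¹ = -harmonic n := by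
      rw [harmonic, ← sum_neg_distrib]
      refine sum_congr rfl fun i _ => ?_
      rw [← inv_neg]
      push_cast
      ring_nf
    rw [hsum, inl_neg, neg_mul, ← sub_eq_add_neg]
  have hterm : ∀ k ∈ range (n + 1),
      (-1) ^ k * ((n + k).choose k : ℚ[ε]) * Ring.choose ((ε : ℚ[ε]) + n) (n - k)
        = inl ((-1 : ℚ) ^ k * n.choose k * (n + k).choose k) *
          (1 + inl (harmonic n - harmonic k) * ε) := by
    intro k hk
    have hkn : k ≤ n := Nat.lt_succ_iff.1 (mem_range.1 hk)
    rw [show (ε : ℚ[ε]) + (n : ℚ[ε]) = inl (n : ℚ) + ε by rw [inl_natCast]; abel,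
      DualNumber.choose_inl_add_eps _ _ fun i hi => by exact_mod_cast (show n ≠ i by omega),
      Ring.choose_natCast, Nat.choose_symm hkn, sum_range_inv_sub_eq_harmonic_sub hkn]
    simp only [inl_mul, ← inl_pow, inl_neg, inl_one, inl_natCast]
    ring
  rw [← sum_congr rfl hterm, ← key, hlhs]

theorem sum_neg_one_pow_mul_choose_mul_choose (n : ℕ) :
    ∑ k ∈ range (n + 1), (-1 : ℚ) ^ k * n.choose k * (n + k).choose k = (-1) ^ n := by
  simpa [fst_sum] using congrArg fst (sum_neg_one_pow_mul_choose_mul_choose_eps_harmonic n)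

theorem sum_neg_one_pow_mul_choose_mul_choose_mul_harmonic_sub (n : ℕ) :
    ∑ k ∈ range (n + 1), (-1 : ℚ) ^ k * n.choose k * (n + k).choose k * (harmonic n - harmonic k)
      = -((-1) ^ n * harmonic n) := by
  simpa [snd_sum, DualNumber.snd_mul] using
    congrArg snd (sum_neg_one_pow_mul_choose_mul_choose_eps_harmonic n)

theorem alternating_sum_binom_harmonic_general (n : ℕ) :
    ∑ k ∈ Finset.Icc 1 n,
      (-1 : ℚ) ^ k * (Nat.choose n k) * (Nat.choose (n + k) k) *
        (∑ i ∈ Finset.Icc 1 k, (1 : ℚ) / i)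
    = 2 * (-1 : ℚ) ^ n * (∑ i ∈ Finset.Icc 1 n, (1 : ℚ) / i) := by
  simp only [one_div, ← harmonic_eq_sum_Icc]
  calc ∑ k ∈ Icc 1 n, (-1 : ℚ) ^ k * n.choose k * (n + k).choose k * harmonic k
      = ∑ k ∈ range (n + 1), (-1 : ℚ) ^ k * n.choose k * (n + k).choose k * harmonic k := by
        rw [range_eq_Ico, sum_eq_sum_Ico_succ_bot (n.succ_pos : 0 < n + 1), harmonic_zero,
          mul_zero, zero_add, zero_add, Nat.succ_eq_add_one, Ico_add_one_right_eq_Icc]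
    _ = harmonic n * ∑ k ∈ range (n + 1), (-1 : ℚ) ^ k * n.choose k * (n + k).choose k
        - ∑ k ∈ range (n + 1),
            (-1 : ℚ) ^ k * n.choose k * (n + k).choose k * (harmonic n - harmonic k) := by
        rw [mul_sum, ← sum_sub_distrib]
        exact sum_congr rfl fun k _ => by ring
    _ = 2 * (-1) ^ n * harmonic n := by
        rw [sum_neg_one_pow_mul_choose_mul_choose,
          sum_neg_one_pow_mul_choose_mul_choose_mul_harmonic_sub]
        ring

theorem alternating_sum_binom_harmonic (n : ℕ) (hn : 0 < n) :
    ∑ k ∈ Finset.Icc 1 n,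
      (-1 : ℚ) ^ k * (Nat.choose n k) * (Nat.choose (n + k) k) *
        (∑ i ∈ Finset.Icc 1 k, (1 : ℚ) / i)
    = 2 * (-1 : ℚ) ^ n * (∑ i ∈ Finset.Icc 1 n, (1 : ℚ) / i) :=
  alternating_sum_binom_harmonic_general n
end

section
/- For every positive integer n, ∑_{k=1}^{n} (-1)^k * C(n,k) * C(n+k,k) * (∑_{i=1}^{k} 1/(n+i)) = (-1)^n * H_n, where H_n is the n-th harmonic number. -/
open Polynomial Finset Nat fwdDiff

/-! As polynomials in `x`, `∑ₖ (-1)^k C(n,k) C(x+k,k) = (-1)^n C(x,n)`: both sides agree at every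
natural number `x = m`, where the left side is `(-1)^n` times the `n`-th forward difference of
`C(·, m)` at `m`. Differentiating at `x = n` gives the theorem: the logarithmic derivative of
`C(x+k,k) = (x+1)⋯(x+k)/k!` at `n` is `∑_{i ≤ k} 1/(n+i)`, and the derivative of
`C(x,n) = x(x-1)⋯(x-n+1)/n!` at `x = n` is `H_n`. -/

lemma fwdDiff_iter_choose_eq_ite (n m : ℕ) :
    Δ_[1] ^[n] (fun x ↦ x.choose m : ℕ → ℤ) =
      fun x ↦ if n ≤ m then (x.choose (m - n) : ℤ) else 0 := by
  split_ifs with h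
  · obtain ⟨j, rfl⟩ := Nat.exists_eq_add_of_le h
    simpa using fwdDiff_iter_choose j n
  · obtain ⟨j, rfl⟩ := Nat.exists_eq_add_of_lt (not_le.mp h)
    have hm : Δ_[1] ^[m] (fun x ↦ x.choose m : ℕ → ℤ) = fun _ ↦ 1 := by
      simpa using fwdDiff_iter_choose 0 m
    rw [show m + j + 1 = j + 1 + m by ring, Function.iterate_add_apply, hm,
      Function.iterate_succ_apply, fwdDiff_const]
    exact Function.iterate_fixed (fwdDiff_const 1 0) j

theorem sum_range_neg_one_pow_mul_choose_mul_add_choose (n m : ℕ) :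
    ∑ k ∈ range (n + 1), (-1 : ℤ) ^ k * n.choose k * (m + k).choose k =
      (-1) ^ n * m.choose n := by
  have hΔ : Δ_[1] ^[n] (fun x ↦ x.choose m : ℕ → ℤ) m = m.choose n := by
    simp only [fwdDiff_iter_choose_eq_ite]
    split_ifs with h
    · rw [choose_symm h]
    · rw [choose_eq_zero_of_lt (not_le.mp h), cast_zero]
  rw [← hΔ, fwdDiff_iter_eq_sum_shift, mul_sum]
  refine sum_congr rfl fun k hk ↦ ?_
  have hsign : (-1 : ℤ) ^ (n + (n - k)) = (-1) ^ k := by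
    rw [show n + (n - k) = k + 2 * (n - k) by grind, pow_add, pow_mul, neg_one_sq, one_pow,
      mul_one]
  rw [smul_eq_mul, smul_eq_mul, mul_one, choose_symm_add, ← mul_assoc, ← mul_assoc, ← pow_add,
    hsign]

theorem prod_range_natCast_sub_eq_factorial_mul_choose {R : Type*} [CommRing R] (m n : ℕ) :
    ∏ j ∈ range n, ((m : R) - j) = n ! * m.choose n := by
  rw [← descPochhammer_eval_eq_prod_range, descPochhammer_eval_eq_descFactorial,
    descFactorial_eq_factorial_mul_choose, cast_mul]

theorem prod_Icc_natCast_add_eq_factorial_mul_choose {R : Type*} [CommSemiring R] (m k : ℕ) :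
    ∏ i ∈ Icc 1 k, ((m : R) + i) = k ! * (m + k).choose k := by
  have h : ∏ i ∈ Icc 1 k, (m + i) = (m + 1).ascFactorial k := by
    rw [ascFactorial_eq_prod_range, range_eq_Ico, ← Ico_add_one_right_eq_Icc,
      ← prod_Ico_add' (fun i ↦ m + i) 0 k 1]
    exact prod_congr rfl fun i _ ↦ by ring
  exact_mod_cast congrArg (Nat.cast : ℕ → R) (h.trans (ascFactorial_eq_factorial_mul_choose m k))

theorem sum_range_one_div_natCast_sub {K : Type*} [DivisionRing K] (n : ℕ) :
    ∑ j ∈ range n, 1 / ((n : K) - j) = ∑ i ∈ Icc 1 n, 1 / (i : K) := by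
  rw [← sum_range_reflect, range_eq_Ico, ← Ico_add_one_right_eq_Icc, ← sum_Ico_add' _ 0 n 1]
  refine sum_congr rfl fun j hj ↦ ?_
  rw [mem_Ico] at hj
  rw [← cast_sub (by omega), show n - (n - 1 - j) = j + 1 by omega]

theorem eval_derivative_prod_eq_mul_sum_div {K ι : Type*} [Field K] (s : Finset ι)
    (p : ι → K[X]) {x : K} (hx : ∀ i ∈ s, (p i).eval x ≠ 0) :
    (derivative (∏ i ∈ s, p i)).eval x =
      (∏ i ∈ s, (p i).eval x) * ∑ i ∈ s, (derivative (p i)).eval x / (p i).eval x := by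
  classical
  rw [derivative_prod_finset, eval_finsetSum, mul_sum]
  refine sum_congr rfl fun i hi ↦ ?_
  rw [eval_mul, eval_prod, ← prod_erase_mul _ _ hi]
  field_simp [hx i hi]

section ChoosePolynomials

variable (K : Type*) [Field K]

-- `choosePoly K n = C(X, n)` and `shiftedChoosePoly K k = C(X + k, k)`.
noncomputable def choosePoly (n : ℕ) : K[X] :=
  C (n ! : K)⁻¹ * ∏ j ∈ range n, (X - C (j : K))

noncomputable def shiftedChoosePoly (k : ℕ) : K[X] :=
  C (k ! : K)⁻¹ * ∏ i ∈ Icc 1 k, (X + C (i : K))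

variable {K} [CharZero K]

lemma inv_factorial_mul_factorial_mul (k : ℕ) (a : K) : (k ! : K)⁻¹ * (k ! * a) = a :=
  inv_mul_cancel_left₀ (cast_ne_zero.mpr k.factorial_ne_zero) a

lemma eval_natCast_choosePoly (m n : ℕ) : (choosePoly K n).eval (m : K) = m.choose n := by
  simp [choosePoly, eval_prod, prod_range_natCast_sub_eq_factorial_mul_choose,
    inv_factorial_mul_factorial_mul]

lemma eval_natCast_shiftedChoosePoly (m k : ℕ) :
    (shiftedChoosePoly K k).eval (m : K) = (m + k).choose k := by
  simp [shiftedChoosePoly, eval_prod, prod_Icc_natCast_add_eq_factorial_mul_choose,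
    inv_factorial_mul_factorial_mul]

theorem sum_neg_one_pow_mul_choose_mul_shiftedChoosePoly (n : ℕ) :
    ∑ k ∈ range (n + 1), C ((-1) ^ k * n.choose k : K) * shiftedChoosePoly K k =
      C ((-1) ^ n : K) * choosePoly K n := by
  refine eq_of_infinite_eval_eq _ _ ((Set.infinite_range_of_injective Nat.cast_injective).mono ?_)
  rintro _ ⟨m, rfl⟩
  simp only [Set.mem_ofPred_eq, eval_finsetSum, eval_mul, eval_C, eval_natCast_shiftedChoosePoly,
    eval_natCast_choosePoly]
  exact_mod_cast sum_range_neg_one_pow_mul_choose_mul_add_choose n m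

lemma eval_natCast_derivative_shiftedChoosePoly (n k : ℕ) :
    (derivative (shiftedChoosePoly K k)).eval (n : K) =
      (n + k).choose k * ∑ i ∈ Icc 1 k, 1 / ((n : K) + i) := by
  rw [shiftedChoosePoly, derivative_C_mul, eval_mul, eval_C, eval_derivative_prod_eq_mul_sum_div]
  · simp only [eval_add, eval_X, eval_C, derivative_X_add_C, eval_one]
    rw [prod_Icc_natCast_add_eq_factorial_mul_choose, mul_assoc, inv_factorial_mul_factorial_mul]
  · intro i hi
    simp only [eval_add, eval_X, eval_C]
    exact_mod_cast (by grind : n + i ≠ 0)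

lemma eval_natCast_derivative_choosePoly_self (n : ℕ) :
    (derivative (choosePoly K n)).eval (n : K) = ∑ i ∈ Icc 1 n, 1 / (i : K) := by
  rw [choosePoly, derivative_C_mul, eval_mul, eval_C, eval_derivative_prod_eq_mul_sum_div]
  · simp only [eval_sub, eval_X, eval_C, derivative_X_sub_C, eval_one]
    rw [prod_range_natCast_sub_eq_factorial_mul_choose, choose_self, cast_one, mul_one,
      inv_factorial_mul_factorial_mul, sum_range_one_div_natCast_sub]
  · intro j hj
    simp only [eval_sub, eval_X, eval_C, sub_ne_zero]
    exact_mod_cast (mem_range.mp hj).ne'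

end ChoosePolynomials

theorem alternating_sum_binom_partial_harmonic_general (n : ℕ) :
    ∑ k ∈ Finset.Icc 1 n,
      (-1 : ℚ) ^ k * (Nat.choose n k) * (Nat.choose (n + k) k) *
        (∑ i ∈ Finset.Icc 1 k, (1 : ℚ) / (n + i))
    = (-1 : ℚ) ^ n * (∑ i ∈ Finset.Icc 1 n, (1 : ℚ) / i) := by
  have h := congrArg (fun p ↦ (derivative p).eval (n : ℚ))
    (sum_neg_one_pow_mul_choose_mul_shiftedChoosePoly (K := ℚ) n)
  simp only [derivative_sum, derivative_C_mul, eval_finsetSum, eval_mul, eval_C,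
    eval_natCast_derivative_shiftedChoosePoly, eval_natCast_derivative_choosePoly_self] at h
  rw [← h, range_eq_Ico, sum_eq_sum_Ico_succ_bot (by omega), zero_add, Ico_add_one_right_eq_Icc]
  simp [mul_assoc]

theorem alternating_sum_binom_partial_harmonic (n : ℕ) (hn : 0 < n) :
    ∑ k ∈ Finset.Icc 1 n,
      (-1 : ℚ) ^ k * (Nat.choose n k) * (Nat.choose (n + k) k) *
        (∑ i ∈ Finset.Icc 1 k, (1 : ℚ) / (n + i))
    = (-1 : ℚ) ^ n * (∑ i ∈ Finset.Icc 1 n, (1 : ℚ) / i) :=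
  alternating_sum_binom_partial_harmonic_general n
end

section
/- For any prime p ≥ 5, the harmonic number H_{⌊p/2⌋} satisfies H_{⌊p/2⌋} ≡ -2*q_p(2) (mod p), where the congruence is between p-adic integers (or rationals with denominators coprime to p) and q_p(2) = (2^{p-1}-1)/p. -/
/-!
Since `p ∣ C(p, k)` for `0 < k < p`, the binomial expansion `2 ^ p - 2 = ∑ C(p, k)` gives
`2 q_p(2) = ∑_{0<k<p} C(p, k) / p`, and `C(p, k) / p ≡ (-1) ^ (k - 1) / k` because
`k · C(p, k) / p = C(p - 1, k - 1) ≡ (-1) ^ (k - 1)`. The alternating sum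
`∑_{0<k<p} (-1) ^ (k - 1) / k` equals `H_{p-1} - H_{(p-1)/2}`, and `H_{p-1} ≡ 0` by the symmetry
`k ↦ p - k`. To transport the congruence from `ZMod p` back to `ℚ`, multiply by
`((p - 1) / 2)!`, which clears the denominators of `H_{(p-1)/2}` and is prime to `p`.
-/

open Finset Nat

theorem sum_Icc_neg_one_pow_mul_inv {K : Type*} [Field K] (h2 : (2 : K) ≠ 0) (m : ℕ) :
    ∑ k ∈ Icc 1 (2 * m), (-1) ^ (k - 1) * (k : K)⁻¹ =
      ∑ k ∈ Icc 1 (2 * m), (k : K)⁻¹ - ∑ k ∈ Icc 1 m, (k : K)⁻¹ := by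
  induction m with
  | zero => simp
  | succ m ih =>
    have hhalf : ((2 * m + 2 : ℕ) : K)⁻¹ * 2 = ((m + 1 : ℕ) : K)⁻¹ := by
      rw [show 2 * m + 2 = 2 * (m + 1) by ring, Nat.cast_mul, Nat.cast_two, mul_inv,
        mul_right_comm, inv_mul_cancel₀ h2, one_mul]
    rw [show 2 * (m + 1) = 2 * m + 1 + 1 by ring, sum_Icc_succ_top (by omega),
      sum_Icc_succ_top (by omega), ih, sum_Icc_succ_top (by omega), sum_Icc_succ_top (by omega),
      sum_Icc_succ_top (by omega), ← hhalf]
    simp only [add_tsub_cancel_right, pow_succ, pow_mul]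
    ring

theorem Nat.Prime.mul_sum_choose_div_self {p : ℕ} (hp : p.Prime) :
    p * ∑ k ∈ Icc 1 (p - 1), p.choose k / p = 2 ^ p - 2 := by
  rw [mul_sum, sum_congr rfl fun k hk => Nat.mul_div_cancel' <| by
    obtain ⟨hk1, hkp⟩ := mem_Icc.mp hk
    exact hp.dvd_choose_self (by omega) (by omega)]
  obtain ⟨n, rfl⟩ : ∃ n, p = n + 1 := ⟨p - 1, (Nat.sub_add_cancel hp.one_le).symm⟩
  have h := sum_range_choose (n + 1)
  rw [range_eq_Ico, sum_eq_sum_Ico_succ_bot (by omega), sum_Ico_succ_top (by omega),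
    zero_add, Ico_add_one_right_eq_Icc] at h
  simp only [choose_zero_right, choose_self, add_tsub_cancel_right] at h ⊢
  omega

theorem ZMod.natCast_ne_zero_of_pos_of_lt {n k : ℕ} (hk0 : 0 < k) (hkn : k < n) :
    (k : ZMod n) ≠ 0 :=
  fun h => hk0.ne' (Nat.eq_zero_of_dvd_of_lt ((ZMod.natCast_eq_zero_iff k n).mp h) hkn)

theorem ZMod.sum_Icc_inv_eq_zero {p : ℕ} [Fact p.Prime] (hp2 : p ≠ 2) :
    ∑ k ∈ Icc 1 (p - 1), (k : ZMod p)⁻¹ = 0 := by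
  have hmaps : ∀ k ∈ Icc 1 (p - 1), p - k ∈ Icc 1 (p - 1) := fun k hk => by
    simp only [mem_Icc] at hk ⊢; omega
  have hinvol : ∀ k ∈ Icc 1 (p - 1), p - (p - k) = k := fun k hk => by
    simp only [mem_Icc] at hk; omega
  have hreflect : ∑ k ∈ Icc 1 (p - 1), (k : ZMod p)⁻¹ =
      ∑ k ∈ Icc 1 (p - 1), ((p - k : ℕ) : ZMod p)⁻¹ :=
    sum_nbij' (p - ·) (p - ·) hmaps hmaps hinvol hinvol fun k hk => by rw [hinvol k hk]
  rw [← Ring.eq_self_iff_eq_zero_of_char_ne_two (by rwa [ZMod.ringChar_zmod_n]),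
    ← sum_neg_distrib]
  refine hreflect.trans (sum_congr rfl fun k hk => ?_) |>.symm
  rw [Nat.cast_sub (by simp only [mem_Icc] at hk; omega), ZMod.natCast_self, zero_sub, inv_neg]

theorem ZMod.natCast_choose_pred {p : ℕ} [Fact p.Prime] {k : ℕ} (hk : k < p) :
    ((p - 1).choose k : ZMod p) = (-1) ^ k := by
  induction k with
  | zero => simp
  | succ k ih =>
    have hpascal : (p - 1).choose k + (p - 1).choose (k + 1) = p.choose (k + 1) := by
      conv_rhs => rw [← Nat.sub_add_cancel (Fact.out : p.Prime).one_le]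
      rfl
    have hzero : (p.choose (k + 1) : ZMod p) = 0 :=
      (ZMod.natCast_eq_zero_iff _ _).2 ((Fact.out : p.Prime).dvd_choose_self k.succ_ne_zero hk)
    rw [← hpascal, Nat.cast_add, ih (by omega)] at hzero
    linear_combination hzero

theorem ZMod.natCast_choose_div_self {p : ℕ} [Fact p.Prime] {k : ℕ} (hk0 : 0 < k)
    (hkp : k < p) :
    ((p.choose k / p : ℕ) : ZMod p) = (-1) ^ (k - 1) * (k : ZMod p)⁻¹ := by
  have hp : p.Prime := Fact.out
  have hmul : k * (p.choose k / p) = (p - 1).choose (k - 1) := by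
    apply Nat.eq_of_mul_eq_mul_left hp.pos
    have := Nat.add_one_mul_choose_eq (p - 1) (k - 1)
    rw [Nat.sub_add_cancel hp.one_le, Nat.sub_add_cancel hk0] at this
    rw [this, ← Nat.mul_assoc, Nat.mul_comm p k, Nat.mul_assoc,
      Nat.mul_div_cancel' (hp.dvd_choose_self hk0.ne' hkp), Nat.mul_comm]
  rw [eq_mul_inv_iff_mul_eq₀ (ZMod.natCast_ne_zero_of_pos_of_lt hk0 hkp), ← Nat.cast_mul,
    Nat.mul_comm, hmul, ZMod.natCast_choose_pred (by omega)]

theorem ZMod.sum_Icc_half_inv_eq_neg_two_mul {p : ℕ} [Fact p.Prime] (hp2 : p ≠ 2) {q : ℤ}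
    (hq : 2 ^ (p - 1) - 1 = p * q) :
    ∑ i ∈ Icc 1 (p / 2), (i : ZMod p)⁻¹ = -2 * q := by
  have hp : p.Prime := Fact.out
  have hhalf : p - 1 = 2 * (p / 2) := by
    have := Nat.odd_iff.mp (hp.odd_of_ne_two hp2)
    omega
  have h2q : 2 * q = ∑ k ∈ Icc 1 (p - 1), ((p.choose k / p : ℕ) : ℤ) := by
    refine mul_left_cancel₀ (Int.natCast_ne_zero.mpr hp.ne_zero) ?_
    rw [← Nat.cast_sum, ← Nat.cast_mul, hp.mul_sum_choose_div_self,
      Nat.cast_sub (Nat.le_self_pow hp.ne_zero 2)]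
    have h2p : (2 : ℤ) ^ p = 2 * 2 ^ (p - 1) := (mul_pow_sub_one hp.ne_zero 2).symm
    push_cast
    linear_combination -2 * hq - h2p
  have halt := sum_Icc_neg_one_pow_mul_inv (K := ZMod p)
    (Ring.two_ne_zero (by rwa [ZMod.ringChar_zmod_n])) (p / 2)
  rw [← hhalf, ZMod.sum_Icc_inv_eq_zero hp2, ← sum_congr rfl fun k hk => by
    obtain ⟨hk1, hkp⟩ := mem_Icc.mp hk
    exact ZMod.natCast_choose_div_self (p := p) (by omega) (by omega)] at halt
  have h2q' := congrArg (Int.cast : ℤ → ZMod p) h2q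
  simp only [Int.cast_mul, Int.cast_ofNat, Int.cast_sum, Int.cast_natCast] at h2q'
  linear_combination h2q' + halt

theorem sum_Icc_inv_mul_factorial {K : Type*} [Field K] {m : ℕ}
    (h : ∀ i ∈ Icc 1 m, (i : K) ≠ 0) :
    (∑ i ∈ Icc 1 m, (i : K)⁻¹) * m ! = ∑ i ∈ Icc 1 m, ((m ! / i : ℕ) : K) := by
  rw [sum_mul]
  refine sum_congr rfl fun i hi => ?_
  obtain ⟨hi1, him⟩ := mem_Icc.mp hi
  rw [Nat.cast_div (Nat.dvd_factorial hi1 him) (h i hi), inv_mul_eq_div]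

theorem Rat.dvd_num_of_mul_natCast_eq {p : ℕ} (hp : p.Prime) {x : ℚ} {d : ℕ} {z : ℤ}
    (hpd : ¬ p ∣ d) (hpz : (p : ℤ) ∣ z) (h : x * d = z) : (p : ℤ) ∣ x.num := by
  have hnum : x.num * d = x.den * z := by
    rw [← Rat.num_div_den x] at h
    field_simp at h
    exact_mod_cast h
  refine ((Nat.prime_iff_prime_int.mp hp).dvd_or_dvd
    (hnum ▸ dvd_mul_of_dvd_right hpz _)).resolve_right ?_
  exact_mod_cast hpd

theorem harmonic_half_cong (p : ℕ) (hp : p.Prime) (hp5 : 5 ≤ p) :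
    (p : ℤ) ∣ ((∑ i ∈ Finset.Icc 1 (p / 2), (1 : ℚ) / i)
      - (-2 * ((2 ^ (p - 1) - 1 : ℚ) / p))).num := by
  have := Fact.mk hp
  obtain ⟨q, hq⟩ := Int.prime_dvd_pow_sub_one hp (n := 2)
    (Nat.isCoprime_iff_coprime.mpr ((Nat.coprime_primes prime_two hp).mpr (by omega)))
  have hq' : ((2 : ℚ) ^ (p - 1) - 1) / p = q := by
    rw [div_eq_iff (by exact_mod_cast hp.ne_zero)]
    exact_mod_cast hq.trans (mul_comm _ _)
  have hhalf : ∀ i ∈ Icc 1 (p / 2), 0 < i ∧ i < p := fun i hi => by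
    simp only [mem_Icc] at hi; omega
  refine Rat.dvd_num_of_mul_natCast_eq hp (d := (p / 2) !) (by rw [hp.dvd_factorial]; omega)
    (z := ((∑ i ∈ Icc 1 (p / 2), (p / 2) ! / i : ℕ) : ℤ) + 2 * q * (p / 2) !) ?_ ?_
  · rw [← ZMod.intCast_zmod_eq_zero_iff_dvd]
    simp only [Int.cast_add, Int.cast_mul, Int.cast_ofNat, Int.cast_natCast, Nat.cast_sum,
      Int.cast_sum]
    rw [← sum_Icc_inv_mul_factorial fun i hi =>
        ZMod.natCast_ne_zero_of_pos_of_lt (hhalf i hi).1 (hhalf i hi).2,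
      ZMod.sum_Icc_half_inv_eq_neg_two_mul (by omega) hq]
    ring
  · simp only [one_div, hq', Int.cast_add, Int.cast_mul, Int.cast_ofNat, Int.cast_natCast,
      Nat.cast_sum, Int.cast_sum]
    rw [← sum_Icc_inv_mul_factorial fun i hi => Nat.cast_ne_zero.mpr (hhalf i hi).1.ne']
    ring
end

section
/- For any prime p ≥ 5, H_{⌊p/3⌋} ≡ -(3/2)*q_p(3) (mod p), where H_n is the n-th harmonic number and q_p(3) = (3^{p-1}-1)/p is the Fermat quotient of 3. -/
/-!
The Fermat quotient `q(a) = (a^(p-1) - 1)/p` is a logarithm modulo `p`: `q(ab) ≡ q(a) + q(b)`,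
and `q(r + pj) ≡ q(r) - j/r`. Summing `q(ak)` over `0 < k < p` both ways, using that
`k ↦ ak mod p` permutes the residues, gives Lerch's formula `a q(a) ≡ ∑ ⌊ak/p⌋ / k`.
For `a = 3` the floor is `0`, `1`, `2` on the three thirds of `(0, p)`; since `∑_{0<k<p} 1/k ≡ 0`
and `k ↦ p - k` carries the first third onto the last with a sign change, the right-hand side
collapses to `-2 H_{⌊p/3⌋}`.
-/

open Finset

/-- Integer division: this is the Fermat quotient only when `p` is a prime not dividing `a`. -/
def fermatQuotient (p a : ℕ) : ℤ := ((a : ℤ) ^ (p - 1) - 1) / p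

theorem Finset.sum_Ioc_mul_mod {M : Type*} [AddCommMonoid M] {a p : ℕ} (ha : a.Coprime p)
    (f : ℕ → M) : ∑ k ∈ Ioc 0 (p - 1), f (a * k % p) = ∑ k ∈ Ioc 0 (p - 1), f k := by
  have hmaps : Set.MapsTo (fun k ↦ a * k % p) (Ioc 0 (p - 1) : Set ℕ) (Ioc 0 (p - 1)) := by
    intro k hk
    simp only [coe_Ioc, Set.mem_Ioc] at hk ⊢
    have hndvd : ¬ p ∣ a * k := fun h ↦ by
      have := Nat.le_of_dvd hk.1 (ha.symm.dvd_of_dvd_mul_left h)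
      omega
    have := Nat.mod_lt (a * k) (show 0 < p by omega)
    have := mt Nat.dvd_of_mod_eq_zero hndvd
    omega
  have hinj : Set.InjOn (fun k ↦ a * k % p) (Ioc 0 (p - 1) : Set ℕ) := by
    intro k hk l hl hkl
    simp only [coe_Ioc, Set.mem_Ioc] at hk hl
    exact (Nat.ModEq.cancel_left_of_coprime (Nat.coprime_comm.mp ha) hkl).eq_of_lt_of_lt
      (by omega) (by omega)
  exact sum_nbij _ hmaps hinj (surjOn_of_injOn_of_card_le _ hmaps hinj le_rfl) fun _ _ ↦ rfl

theorem ZMod.natCast_sub_self {p k : ℕ} (hk : k ≤ p) : ((p - k : ℕ) : ZMod p) = -k := by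
  rw [Nat.cast_sub hk, ZMod.natCast_self, zero_sub]

namespace ZMod

variable {p : ℕ} [hp : Fact p.Prime]

theorem sum_Ioc_inv_reflect {n : ℕ} (hn : n < p) :
    ∑ k ∈ Ioc (p - 1 - n) (p - 1), (k : ZMod p)⁻¹ = -∑ k ∈ Ioc 0 n, (k : ZMod p)⁻¹ := by
  rw [← sum_neg_distrib]
  refine sum_nbij' (p - ·) (p - ·) ?_ ?_ ?_ ?_ ?_ <;> intro k hk <;> simp only [mem_Ioc] at hk
  · simp only [mem_Ioc]; omega
  · simp only [mem_Ioc]; omega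
  · omega
  · omega
  · rw [natCast_sub_self (by omega), inv_neg, neg_neg]

theorem sum_Ioc_inv_eq_zero (hp2 : p ≠ 2) : ∑ k ∈ Ioc 0 (p - 1), (k : ZMod p)⁻¹ = 0 := by
  have hneg := sum_Ioc_inv_reflect (p := p) (n := p - 1) (by have := hp.out.pos; omega)
  rw [Nat.sub_self, eq_comm, neg_eq_self_iff] at hneg
  refine hneg.resolve_right fun h ↦ ?_
  have := hp.out.eq_one_or_self_of_dvd 2 ⟨_, h.symm⟩
  omega

theorem sum_Ioc_three_mul_div_mul_inv (hp5 : 5 ≤ p) :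
    ∑ k ∈ Ioc 0 (p - 1), ((3 * k / p : ℕ) : ZMod p) * (k : ZMod p)⁻¹ =
      -2 * ∑ k ∈ Ioc 0 (p / 3), (k : ZMod p)⁻¹ := by
  set m := p / 3
  have hp3 : p % 3 ≠ 0 := fun h ↦ by
    have := hp.out.eq_one_or_self_of_dvd 3 (Nat.dvd_of_mod_eq_zero h)
    omega
  -- `⌊3k/p⌋` is `0`, `1`, `2` on the three blocks `(0, m]`, `(m, p-1-m]`, `(p-1-m, p-1]`
  have hsplit (f : ℕ → ZMod p) : ∑ k ∈ Ioc 0 (p - 1), f k =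
      ∑ k ∈ Ioc 0 m, f k + ∑ k ∈ Ioc m (p - 1 - m), f k + ∑ k ∈ Ioc (p - 1 - m) (p - 1), f k := by
    rw [sum_Ioc_consecutive _ (by omega) (by omega), sum_Ioc_consecutive _ (by omega) (by omega)]
  have hblock (j lo hi : ℕ) (hj : ∀ k ∈ Ioc lo hi, j * p ≤ 3 * k ∧ 3 * k < (j + 1) * p) :
      ∑ k ∈ Ioc lo hi, ((3 * k / p : ℕ) : ZMod p) * (k : ZMod p)⁻¹ =
        j * ∑ k ∈ Ioc lo hi, (k : ZMod p)⁻¹ := by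
    rw [mul_sum]
    refine sum_congr rfl fun k hk ↦ ?_
    rw [Nat.div_eq_of_lt_le (hj k hk).1 (hj k hk).2]
  have hsum := sum_Ioc_inv_eq_zero (p := p) (by omega)
  rw [hsplit] at hsum
  have hrefl := sum_Ioc_inv_reflect (p := p) (n := m) (by omega)
  rw [hsplit, hblock 0 _ _ (fun k hk ↦ by simp only [mem_Ioc] at hk; omega),
    hblock 1 _ _ (fun k hk ↦ by simp only [mem_Ioc] at hk; omega),
    hblock 2 _ _ (fun k hk ↦ by simp only [mem_Ioc] at hk; omega)]
  push_cast
  linear_combination hsum + hrefl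

end ZMod

section FermatQuotient

variable {p : ℕ} [hp : Fact p.Prime]

theorem mul_fermatQuotient_eq_pow_sub_one {a : ℕ} (ha : ¬ p ∣ a) :
    (p : ℤ) * fermatQuotient p a = a ^ (p - 1) - 1 := by
  have hcop : IsCoprime (a : ℤ) p :=
    Nat.isCoprime_iff_coprime.mpr ((Nat.coprime_comm).mp ((hp.out.coprime_iff_not_dvd).mpr ha))
  exact Int.mul_ediv_cancel' (Int.ModEq.pow_card_sub_one_eq_one hp.out hcop).symm.dvd

theorem fermatQuotient_mul {a b : ℕ} (ha : ¬ p ∣ a) (hb : ¬ p ∣ b) :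
    (fermatQuotient p (a * b) : ZMod p) = fermatQuotient p a + fermatQuotient p b := by
  have hab : ¬ p ∣ a * b := fun h ↦ (hp.out.dvd_mul.mp h).elim ha hb
  have hq : fermatQuotient p (a * b) =
      fermatQuotient p a + fermatQuotient p b + p * (fermatQuotient p a * fermatQuotient p b) := by
    refine mul_left_cancel₀ (Int.natCast_ne_zero.mpr hp.out.ne_zero) ?_
    have hqab := mul_fermatQuotient_eq_pow_sub_one hab
    push_cast at hqab
    linear_combination hqab - (b : ℤ) ^ (p - 1) * mul_fermatQuotient_eq_pow_sub_one ha
      - (1 + p * fermatQuotient p a) * mul_fermatQuotient_eq_pow_sub_one hb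
  rw [hq]
  push_cast
  rw [ZMod.natCast_self, zero_mul, add_zero]

theorem fermatQuotient_add_mul {r : ℕ} (hr : ¬ p ∣ r) (j : ℕ) :
    (fermatQuotient p (r + p * j) : ZMod p) = fermatQuotient p r - j * (r : ZMod p)⁻¹ := by
  have hrj : ¬ p ∣ r + p * j := fun h ↦ hr ((Nat.dvd_add_left (dvd_mul_right p j)).mp h)
  obtain ⟨c, hc⟩ := sq_dvd_add_pow_sub_sub ((p : ℤ) * j) (r : ℤ) (p - 1)
  have hq : fermatQuotient p (r + p * j) =
      fermatQuotient p r + (r : ℤ) ^ (p - 1 - 1) * j * ((p - 1 : ℕ) : ℤ) + p * (j ^ 2 * c) := by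
    refine mul_left_cancel₀ (Int.natCast_ne_zero.mpr hp.out.ne_zero) ?_
    have hqrj := mul_fermatQuotient_eq_pow_sub_one hrj
    push_cast at hqrj
    linear_combination hqrj - mul_fermatQuotient_eq_pow_sub_one hr + hc
  have hr0 : (r : ZMod p) ≠ 0 := by rwa [Ne, ZMod.natCast_eq_zero_iff]
  have hinv : (r : ZMod p) ^ (p - 1 - 1) = (r : ZMod p)⁻¹ := by
    refine eq_inv_of_mul_eq_one_left ?_
    rw [← pow_succ, Nat.sub_add_cancel (by have := hp.out.two_le; omega),
      ZMod.pow_card_sub_one_eq_one hr0]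
  rw [hq]
  push_cast
  rw [hinv, ZMod.natCast_sub_self hp.out.one_le, ZMod.natCast_self]
  ring

theorem natCast_mul_fermatQuotient_eq_sum {a : ℕ} (ha : ¬ p ∣ a) :
    (a : ZMod p) * fermatQuotient p a =
      ∑ k ∈ Ioc 0 (p - 1), ((a * k / p : ℕ) : ZMod p) * (k : ZMod p)⁻¹ := by
  have hk : ∀ k ∈ Ioc 0 (p - 1), ¬ p ∣ k := fun k hk' ↦
    Nat.not_dvd_of_pos_of_lt (mem_Ioc.mp hk').1
      (by have := (mem_Ioc.mp hk').2; have := hp.out.pos; omega)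
  have hak : ∀ k ∈ Ioc 0 (p - 1), ¬ p ∣ a * k := fun k hk' h ↦
    (hp.out.dvd_mul.mp h).elim ha (hk k hk')
  have ha0 : (a : ZMod p) ≠ 0 := by rwa [Ne, ZMod.natCast_eq_zero_iff]
  have hmul : ∑ k ∈ Ioc 0 (p - 1), (fermatQuotient p (a * k) : ZMod p) =
      -fermatQuotient p a + ∑ k ∈ Ioc 0 (p - 1), (fermatQuotient p k : ZMod p) := by
    rw [sum_congr rfl fun k hk' ↦ fermatQuotient_mul ha (hk k hk'), sum_add_distrib, sum_const,
      Nat.card_Ioc, nsmul_eq_mul, Nat.sub_zero, ZMod.natCast_sub_self hp.out.one_le]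
    ring
  have hmod : ∑ k ∈ Ioc 0 (p - 1), (fermatQuotient p (a * k) : ZMod p) =
      ∑ k ∈ Ioc 0 (p - 1), (fermatQuotient p k : ZMod p) -
        (a : ZMod p)⁻¹ * ∑ k ∈ Ioc 0 (p - 1), ((a * k / p : ℕ) : ZMod p) * (k : ZMod p)⁻¹ := by
    have hterm : ∀ k ∈ Ioc 0 (p - 1), (fermatQuotient p (a * k) : ZMod p) =
        fermatQuotient p (a * k % p) -
          (a : ZMod p)⁻¹ * (((a * k / p : ℕ) : ZMod p) * (k : ZMod p)⁻¹) := by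
      intro k hk'
      have hr : ¬ p ∣ a * k % p := fun h ↦ hak k hk' ((Nat.dvd_mod_iff dvd_rfl).mp h)
      conv_lhs => rw [← Nat.mod_add_div (a * k) p]
      rw [fermatQuotient_add_mul hr, ZMod.natCast_mod, Nat.cast_mul, mul_inv]
      ring
    rw [sum_congr rfl hterm, sum_sub_distrib, ← mul_sum,
      sum_Ioc_mul_mod (f := fun n ↦ (fermatQuotient p n : ZMod p))
        ((Nat.coprime_comm).mp ((hp.out.coprime_iff_not_dvd).mpr ha))]
  have h : (a : ZMod p)⁻¹ *
      ∑ k ∈ Ioc 0 (p - 1), ((a * k / p : ℕ) : ZMod p) * (k : ZMod p)⁻¹ = fermatQuotient p a := by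
    linear_combination hmod - hmul
  rw [← h, mul_inv_cancel_left₀ ha0]

end FermatQuotient

open Nat in
theorem exists_sum_Icc_one_div_eq_div_factorial {p n : ℕ} [Fact p.Prime] (hn : n < p) :
    ∃ N : ℤ, ∑ i ∈ Icc 1 n, (1 : ℚ) / i = N / n ! ∧
      (N : ZMod p) = n ! * ∑ i ∈ Ioc 0 n, (i : ZMod p)⁻¹ := by
  refine ⟨((∑ i ∈ Icc 1 n, n ! / i : ℕ) : ℤ), ?_, ?_⟩
  · rw [Int.cast_natCast, Nat.cast_sum, sum_div]
    refine sum_congr rfl fun i hi ↦ ?_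
    have hi := mem_Icc.mp hi
    rw [Nat.cast_div (Nat.dvd_factorial hi.1 hi.2) (Nat.cast_ne_zero.mpr (by omega))]
    field_simp
  · rw [Int.cast_natCast, Nat.cast_sum, ← Icc_add_one_left_eq_Ioc, zero_add, mul_sum]
    refine sum_congr rfl fun i hi ↦ ?_
    have hi := mem_Icc.mp hi
    have hi0 : (i : ZMod p) ≠ 0 := by
      rw [Ne, ZMod.natCast_eq_zero_iff]
      exact Nat.not_dvd_of_pos_of_lt hi.1 (by omega)
    rw [Nat.cast_div (Nat.dvd_factorial hi.1 hi.2) hi0, div_eq_mul_inv]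

theorem Rat.dvd_num_of_eq_div {p : ℤ} (hp : Prime p) {x : ℚ} {N D : ℤ} (hx : x = N / D)
    (hN : p ∣ N) (hD : ¬ p ∣ D) : p ∣ x.num := by
  have hD0 : (D : ℚ) ≠ 0 := by exact_mod_cast fun h : D = 0 ↦ hD (h ▸ dvd_zero p)
  have hcross : x.num * D = N * x.den := by
    have : (x.num : ℚ) * D = N * x.den := by
      rw [← Rat.mul_den_eq_num, hx]
      field_simp
    exact_mod_cast this
  exact (hp.dvd_or_dvd (hcross ▸ hN.mul_right _)).resolve_right hD

theorem harmonic_third_cong (p : ℕ) (hp : p.Prime) (hp5 : 5 ≤ p) :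
    (p : ℤ) ∣ ((∑ i ∈ Finset.Icc 1 (p / 3), (1 : ℚ) / i)
      - (-(3 / 2) * ((3 ^ (p - 1) - 1 : ℚ) / p))).num := by
  have := Fact.mk hp
  have h3 : ¬ p ∣ 3 := Nat.not_dvd_of_pos_of_lt (by norm_num) (by omega)
  obtain ⟨N, hH, hN⟩ := exists_sum_Icc_one_div_eq_div_factorial (p := p) (n := p / 3) (by omega)
  have hq : (3 ^ (p - 1) - 1 : ℚ) / p = fermatQuotient p 3 := by
    rw [div_eq_iff (by exact_mod_cast hp.ne_zero), mul_comm]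
    exact_mod_cast (mul_fermatQuotient_eq_pow_sub_one h3).symm
  have hthree :=
    (natCast_mul_fermatQuotient_eq_sum h3).trans (ZMod.sum_Ioc_three_mul_div_mul_inv hp5)
  have hD : ¬ p ∣ 2 * (p / 3).factorial := by
    rw [hp.dvd_mul, hp.dvd_factorial, not_or]
    exact ⟨Nat.not_dvd_of_pos_of_lt two_pos (by omega), by omega⟩
  refine Rat.dvd_num_of_eq_div (Nat.prime_iff_prime_int.mp hp)
    (N := 2 * N + 3 * fermatQuotient p 3 * (p / 3).factorial) (D := 2 * (p / 3).factorial)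
    ?_ ?_ (by exact_mod_cast hD)
  · rw [hH, hq]
    push_cast
    field_simp
    ring
  · rw [← ZMod.intCast_zmod_eq_zero_iff_dvd]
    push_cast at hthree ⊢
    rw [hN]
    linear_combination ((p / 3).factorial : ZMod p) * hthree
end

section
/- For any prime p ≥ 5, H_{⌊p/4⌋} ≡ -3*q_p(2) (mod p), where H_n is the n-th harmonic number and q_p(2) = (2^{p-1}-1)/p. -/
/-!
Work in `ZMod p` with `H n = ∑_{k ≤ n} 1/k`, `A n = ∑_{k ≤ n} (-1)^(k+1)/k` and `h = (p-1)/2`.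
Since `C(p,k)/p ≡ (-1)^(k+1)/k`, summing `C(p,k)` over `0 < k < p` gives `2 q ≡ A (p-1)`,
`q = q_p(2)`. In any field of characteristic `≠ 2`, `H n - A n = H ⌊n/2⌋`. Pairing `k` with `p - k`
gives `H (p-1) = 0` and `A (p-1) = 2 A h`, hence `q = A h`, `H h = -2 q` and
`H ⌊p/4⌋ = H h - A h = -3 q`. Multiplying by `⌊p/4⌋!` turns this into a statement about integers.
-/

open Finset

section Harmonic

variable (K : Type*) [DivisionRing K]

def harmonicSum (n : ℕ) : K := ∑ k ∈ Icc 1 n, (k : K)⁻¹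

def altHarmonicSum (n : ℕ) : K := ∑ k ∈ Icc 1 n, (-1) ^ (k + 1) * (k : K)⁻¹

variable {K}

theorem harmonicSum_succ (n : ℕ) : harmonicSum K (n + 1) = harmonicSum K n + (n + 1 : K)⁻¹ := by
  rw [harmonicSum, sum_Icc_succ_top (by omega), Nat.cast_succ, harmonicSum]

theorem altHarmonicSum_succ (n : ℕ) :
    altHarmonicSum K (n + 1) = altHarmonicSum K n + (-1) ^ n * (n + 1 : K)⁻¹ := by
  rw [altHarmonicSum, sum_Icc_succ_top (by omega), Nat.cast_succ, altHarmonicSum]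
  simp only [pow_succ, mul_neg_one, neg_neg]

end Harmonic

theorem Finset.sum_Icc_two_mul_eq_sum_add_reflect {M : Type*} [AddCommMonoid M] (f : ℕ → M)
    (n : ℕ) :
    ∑ k ∈ Icc 1 (2 * n), f k = ∑ k ∈ Icc 1 n, (f k + f (2 * n + 1 - k)) := by
  have hsplit : Icc 1 (2 * n) = Icc 1 n ∪ Icc (n + 1) (2 * n) := by
    ext k; simp only [mem_union, mem_Icc]; omega
  have hdisj : Disjoint (Icc 1 n) (Icc (n + 1) (2 * n)) :=
    disjoint_left.mpr fun k hk hk' => by simp only [mem_Icc] at hk hk'; omega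
  have hreflect : ∑ k ∈ Icc (n + 1) (2 * n), f k = ∑ k ∈ Icc 1 n, f (2 * n + 1 - k) := by
    refine sum_nbij' (fun k => 2 * n + 1 - k) (fun k => 2 * n + 1 - k) ?_ ?_ ?_ ?_ ?_ <;>
      intro k hk <;> simp only [mem_Icc] at hk ⊢ <;> first | omega | congr 1; omega
  rw [hsplit, sum_union hdisj, hreflect, sum_add_distrib]

-- The even terms of `H n - A n` are `2 / (2j) = 1 / j`.
theorem harmonicSum_sub_altHarmonicSum {K : Type*} [Field K] (h2 : (2 : K) ≠ 0) (n : ℕ) :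
    harmonicSum K n - altHarmonicSum K n = harmonicSum K (n / 2) := by
  induction n with
  | zero => simp [harmonicSum, altHarmonicSum]
  | succ n ih =>
    rw [harmonicSum_succ, altHarmonicSum_succ]
    rcases Nat.even_or_odd' n with ⟨j, rfl | rfl⟩
    · rw [(by omega : (2 * j + 1) / 2 = 2 * j / 2), ← ih, pow_mul]
      ring
    · rw [(by omega : (2 * j + 1) / 2 = j)] at ih
      rw [(by omega : (2 * j + 1 + 1) / 2 = j + 1), harmonicSum_succ j, ← ih, pow_succ, pow_mul]
      push_cast
      rw [(by ring : (2 * j + 1 + 1 : K) = 2 * (j + 1)), mul_inv]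
      field_simp
      ring

theorem Nat.sum_Icc_choose_add_two {n : ℕ} (hn : n ≠ 0) :
    ∑ k ∈ Icc 1 (n - 1), n.choose k + 2 = 2 ^ n := by
  obtain ⟨m, rfl⟩ := Nat.exists_eq_add_one_of_ne_zero hn
  rw [← Nat.sum_range_choose, sum_range_succ, sum_range_succ', ← Ico_add_one_right_eq_Icc,
    sum_Ico_eq_sum_range]
  simp [add_comm 1]

theorem ZMod.natCast_self_sub {n k : ℕ} (hk : k ≤ n) : ((n - k : ℕ) : ZMod n) = -k := by
  rw [Nat.cast_sub hk, ZMod.natCast_self, zero_sub]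

theorem ZMod.natCast_ne_zero_of_lt {n k : ℕ} (hk0 : k ≠ 0) (hk : k < n) : (k : ZMod n) ≠ 0 := by
  rw [Ne, ZMod.natCast_eq_zero_iff]
  exact Nat.not_dvd_of_pos_of_lt (Nat.pos_of_ne_zero hk0) hk

namespace ZMod

variable {p : ℕ} [hp : Fact p.Prime]

theorem natCast_choose_pred_s8 {k : ℕ} (hk : k < p) : ((p - 1).choose k : ZMod p) = (-1) ^ k := by
  induction k with
  | zero => simp
  | succ k ih =>
    have hpascal := Nat.choose_succ_succ' (p - 1) k
    rw [Nat.sub_add_cancel hp.out.one_le] at hpascal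
    have hdvd : ((p.choose (k + 1) : ℕ) : ZMod p) = 0 :=
      (natCast_eq_zero_iff _ _).mpr (hp.out.dvd_choose_self k.succ_ne_zero hk)
    rw [hpascal, Nat.cast_add, ih (by omega)] at hdvd
    linear_combination hdvd

theorem natCast_choose_div_self_s8 {k : ℕ} (hk0 : k ≠ 0) (hk : k < p) :
    ((p.choose k / p : ℕ) : ZMod p) = (-1) ^ (k + 1) * (k : ZMod p)⁻¹ := by
  obtain ⟨j, rfl⟩ := Nat.exists_eq_add_one_of_ne_zero hk0
  have hmul : p.choose (j + 1) / p * (j + 1) = (p - 1).choose j := by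
    apply Nat.eq_of_mul_eq_mul_left hp.out.pos
    have h := Nat.add_one_mul_choose_eq (p - 1) j
    rw [Nat.sub_add_cancel hp.out.one_le] at h
    rw [h, ← mul_assoc, Nat.mul_div_cancel' (hp.out.dvd_choose_self j.succ_ne_zero hk)]
  rw [eq_mul_inv_iff_mul_eq₀ (natCast_ne_zero_of_lt j.succ_ne_zero hk), ← Nat.cast_mul, hmul,
    natCast_choose_pred_s8 (by omega)]
  simp only [pow_succ, mul_neg_one, neg_neg]

theorem altHarmonicSum_pred_eq_two_mul {q : ℤ} (hq : 2 ^ (p - 1) - 1 = p * q) :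
    altHarmonicSum (ZMod p) (p - 1) = 2 * q := by
  have hsum : ∑ k ∈ Icc 1 (p - 1), ((p.choose k / p : ℕ) : ℤ) = 2 * q := by
    apply mul_left_cancel₀ (Nat.cast_ne_zero.mpr hp.out.ne_zero : (p : ℤ) ≠ 0)
    have hterm : ∀ k ∈ Icc 1 (p - 1), (p : ℤ) * ((p.choose k / p : ℕ) : ℤ) = p.choose k := by
      intro k hk
      rw [mem_Icc] at hk
      rw [← Nat.cast_mul, Nat.mul_div_cancel' (hp.out.dvd_choose_self (by omega) (by omega))]
    have hchoose : ((∑ k ∈ Icc 1 (p - 1), p.choose k : ℕ) : ℤ) + 2 = 2 ^ p := by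
      exact_mod_cast Nat.sum_Icc_choose_add_two hp.out.ne_zero
    have hpow : (2 : ℤ) ^ p = 2 * 2 ^ (p - 1) := by
      rw [← pow_succ', Nat.sub_add_cancel hp.out.one_le]
    rw [mul_sum, sum_congr rfl hterm, ← Nat.cast_sum]
    linear_combination hchoose + hpow + 2 * hq
  have hcast := congrArg (Int.cast : ℤ → ZMod p) hsum
  simp only [Int.cast_sum, Int.cast_natCast, Int.cast_mul, Int.cast_ofNat] at hcast
  rw [← hcast, altHarmonicSum]
  refine sum_congr rfl fun k hk => ?_
  rw [mem_Icc] at hk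
  rw [natCast_choose_div_self_s8 (by omega) (by omega)]

theorem harmonicSum_pred_eq_zero (hp2 : p ≠ 2) : harmonicSum (ZMod p) (p - 1) = 0 := by
  have hodd := Nat.two_mul_div_two_add_one_of_odd (hp.out.odd_of_ne_two hp2)
  rw [harmonicSum, (by omega : p - 1 = 2 * (p / 2)), sum_Icc_two_mul_eq_sum_add_reflect, hodd]
  refine sum_eq_zero fun k hk => ?_
  rw [mem_Icc] at hk
  rw [natCast_self_sub (by omega), inv_neg, add_neg_cancel]

theorem altHarmonicSum_pred_eq_two_mul_altHarmonicSum_half (hp2 : p ≠ 2) :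
    altHarmonicSum (ZMod p) (p - 1) = 2 * altHarmonicSum (ZMod p) (p / 2) := by
  have hodd := Nat.two_mul_div_two_add_one_of_odd (hp.out.odd_of_ne_two hp2)
  rw [altHarmonicSum, (by omega : p - 1 = 2 * (p / 2)), sum_Icc_two_mul_eq_sum_add_reflect, hodd,
    altHarmonicSum, mul_sum]
  refine sum_congr rfl fun k hk => ?_
  rw [mem_Icc] at hk
  have hsign : (-1 : ZMod p) ^ (p - k + 1) = -(-1) ^ (k + 1) := by
    rw [neg_one_pow_eq_pow_mod_two, neg_one_pow_eq_pow_mod_two (k + 1)]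
    rcases Nat.mod_two_eq_zero_or_one (k + 1) with h | h <;>
      rw [h, (by omega : (p - k + 1) % 2 = 1 - (k + 1) % 2), h] <;> simp
  rw [natCast_self_sub (by omega), hsign, inv_neg, neg_mul_neg]
  ring

theorem harmonicSum_quarter_eq (hp2 : p ≠ 2) {q : ℤ} (hq : 2 ^ (p - 1) - 1 = p * q) :
    harmonicSum (ZMod p) (p / 4) = -3 * q := by
  have h2 : (2 : ZMod p) ≠ 0 := Ring.two_ne_zero (by rwa [ringChar_zmod_n])
  have hodd := Nat.two_mul_div_two_add_one_of_odd (hp.out.odd_of_ne_two hp2)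
  have hfull := harmonicSum_sub_altHarmonicSum h2 (p - 1)
  have hhalf := harmonicSum_sub_altHarmonicSum h2 (p / 2)
  have hq' := altHarmonicSum_pred_eq_two_mul hq
  rw [harmonicSum_pred_eq_zero hp2, altHarmonicSum_pred_eq_two_mul_altHarmonicSum_half hp2,
    (by omega : (p - 1) / 2 = p / 2)] at hfull
  rw [altHarmonicSum_pred_eq_two_mul_altHarmonicSum_half hp2] at hq'
  rw [Nat.div_div_eq_div_mul] at hhalf
  have hA : altHarmonicSum (ZMod p) (p / 2) = q := mul_left_cancel₀ h2 hq'
  rw [← hhalf, ← hfull, hA]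
  ring

end ZMod

theorem natCast_sum_factorial_div {K : Type*} [Field K] {n : ℕ}
    (hn : ∀ k ∈ Icc 1 n, (k : K) ≠ 0) :
    ((∑ k ∈ Icc 1 n, n.factorial / k : ℕ) : K) = n.factorial * harmonicSum K n := by
  rw [Nat.cast_sum, harmonicSum, mul_sum]
  refine sum_congr rfl fun k hk => ?_
  obtain ⟨hk1, hkn⟩ := mem_Icc.mp hk
  rw [Nat.cast_div (Nat.dvd_factorial hk1 hkn) (hn k hk), div_eq_mul_inv]

theorem Rat.dvd_num_of_mul_eq {p : ℤ} (hp : Prime p) {r : ℚ} {N c : ℤ} (hN : ¬p ∣ N)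
    (hr : r * N = c) (hc : p ∣ c) : p ∣ r.num := by
  have hnum : r.num * N = c * r.den := by
    rw [← Int.cast_inj (α := ℚ)]
    push_cast
    rw [← Rat.mul_den_eq_num, ← hr]
    ring
  exact (hp.dvd_or_dvd (hnum ▸ dvd_mul_of_dvd_left hc _)).resolve_right hN

theorem harmonic_quarter_cong (p : ℕ) (hp : p.Prime) (hp5 : 5 ≤ p) :
    (p : ℤ) ∣ ((∑ i ∈ Finset.Icc 1 (p / 4), (1 : ℚ) / i)
      - (-3 * ((2 ^ (p - 1) - 1 : ℚ) / p))).num := by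
  have := Fact.mk hp
  have hp2 : p ≠ 2 := by omega
  have hcop : IsCoprime ((2 : ℕ) : ℤ) p :=
    Nat.isCoprime_iff_coprime.mpr ((Nat.coprime_primes Nat.prime_two hp).mpr hp2.symm)
  obtain ⟨q, hq⟩ := Int.prime_dvd_pow_sub_one hp hcop
  push_cast at hq
  have hqℚ : ((2 ^ (p - 1) - 1 : ℚ) / p) = q := by
    rw [div_eq_iff (by exact_mod_cast hp.ne_zero)]
    exact_mod_cast hq.trans (mul_comm _ _)
  set N := (p / 4).factorial
  refine Rat.dvd_num_of_mul_eq (Nat.prime_iff_prime_int.mp hp) (N := N)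
    (c := ((∑ k ∈ Icc 1 (p / 4), N / k : ℕ) : ℤ) + 3 * q * N) ?_ ?_ ?_
  · rw [Int.natCast_dvd_natCast, hp.dvd_factorial]
    omega
  · simp only [one_div, hqℚ, Int.cast_add, Int.cast_mul, Int.cast_natCast, Int.cast_ofNat]
    rw [natCast_sum_factorial_div fun k hk => Nat.cast_ne_zero.mpr (by grind), harmonicSum]
    ring
  · rw [← ZMod.intCast_zmod_eq_zero_iff_dvd]
    simp only [Int.cast_add, Int.cast_mul, Int.cast_natCast, Int.cast_ofNat]
    rw [natCast_sum_factorial_div fun k hk => ZMod.natCast_ne_zero_of_lt (by grind) (by grind),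
      ZMod.harmonicSum_quarter_eq hp2 hq]
    ring
end

section
/- For integers a ≥ b ≥ 0 and a prime p ≥ 5, the binomial coefficient C(a*p, b*p) is congruent to C(a, b) modulo p^2 (Babbage's theorem). -/
/-!
Write `(X + 1) ^ p = (X ^ p + 1) + p E`, where `E` has no monomials of degree divisible by `p`
(the middle binomial coefficients of `p` are divisible by `p`). Raising to the `a`-th power,
`(X + 1) ^ (a p) ≡ (X ^ p + 1) ^ a + a p E (X ^ p + 1) ^ (a - 1) mod p²`. The coefficient of
`X ^ (b p)` is `C(a p, b p)` on the left and `C(a, b)` on the right, since the correction term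
has no monomials of degree divisible by `p`.
-/

open Polynomial

theorem Nat.Prime.exists_X_add_one_pow_eq_expand_add_mul {p : ℕ} (hp : p.Prime) :
    ∃ E : ℤ[X], (X + 1) ^ p = expand ℤ p (X + 1) + C (p : ℤ) * E ∧
      ∀ k, p ∣ k → E.coeff k = 0 := by
  set D : ℤ[X] := (X + 1) ^ p - expand ℤ p (X + 1)
  have hD (k : ℕ) : D.coeff k =
      (p.choose k : ℤ) - ((if k = p then 1 else 0) + if k = 0 then 1 else 0) := by
    simp [D, coeff_X_add_one_pow, coeff_X_pow, coeff_one]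
  have hdvd : C (p : ℤ) ∣ D := by
    refine (C_dvd_iff_dvd_coeff _ _).2 fun k => ?_
    rw [hD]
    rcases Nat.eq_zero_or_pos k with rfl | hk0
    · simp [hp.ne_zero, eq_comm]
    rcases lt_trichotomy k p with hkp | rfl | hkp
    · simpa [hkp.ne, hk0.ne'] using Int.natCast_dvd_natCast.2 (hp.dvd_choose_self hk0.ne' hkp)
    · simp [hk0.ne']
    · simp [Nat.choose_eq_zero_of_lt hkp, hkp.ne', hk0.ne']
  obtain ⟨E, hE⟩ := hdvd
  refine ⟨E, by rw [← hE, add_sub_cancel], fun k hk => ?_⟩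
  have hDk : D.coeff k = 0 := by
    rw [hD]
    rcases Nat.eq_zero_or_pos k with rfl | hk0
    · simp [hp.ne_zero, eq_comm]
    rcases (Nat.le_of_dvd hk0 hk).eq_or_lt with rfl | hpk
    · simp [hk0.ne']
    · simp [Nat.choose_eq_zero_of_lt hpk, hpk.ne', hk0.ne']
  simpa [hE, hp.ne_zero] using hDk

theorem Polynomial.coeff_mul_expand_eq_zero {R : Type*} [CommSemiring R] {p : ℕ} (hp : 0 < p)
    {F : R[X]} (hF : ∀ k, p ∣ k → F.coeff k = 0) (G : R[X]) {n : ℕ} (hn : p ∣ n) :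
    (F * expand R p G).coeff n = 0 := by
  rw [coeff_mul]
  refine Finset.sum_eq_zero fun ⟨i, j⟩ hij => ?_
  rw [Finset.HasAntidiagonal.mem_antidiagonal] at hij
  by_cases hj : p ∣ j
  · rw [hF i ((Nat.dvd_add_left hj).1 (hij ▸ hn)), zero_mul]
  · rw [coeff_expand hp, if_neg hj, mul_zero]

theorem babbage_general (p : ℕ) (hp : p.Prime) (a b : ℕ) :
    ((p : ℤ) ^ 2) ∣ ((Nat.choose (a * p) (b * p) : ℤ) - (Nat.choose a b : ℤ)) := by
  obtain ⟨E, hpow, hE⟩ := hp.exists_X_add_one_pow_eq_expand_add_mul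
  set Y := expand ℤ p (X + 1)
  have hsq : C ((p : ℤ) ^ 2) ∣
      (X + 1) ^ (a * p) - Y ^ (a - 1) * (C (p : ℤ) * E) * C (a : ℤ) - Y ^ a := by
    rw [pow_mul', hpow, C_pow, map_natCast C a]
    exact (pow_dvd_pow_of_dvd (dvd_mul_right _ _) 2).trans (sq_dvd_add_pow_sub_sub _ _ _)
  have hcorr : (Y ^ (a - 1) * (C (p : ℤ) * E) * C (a : ℤ)).coeff (b * p) = 0 := by
    rw [show Y ^ (a - 1) * (C (p : ℤ) * E) * C (a : ℤ) = C ((p : ℤ) * a) * (E * Y ^ (a - 1)) by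
      rw [C_mul]; ring, coeff_C_mul, ← map_pow,
      coeff_mul_expand_eq_zero hp.pos hE _ (dvd_mul_left p b), mul_zero]
  have hY : (Y ^ a).coeff (b * p) = a.choose b := by
    rw [← map_pow, coeff_expand_mul hp.pos, coeff_X_add_one_pow]
  have := (C_dvd_iff_dvd_coeff _ _).1 hsq (b * p)
  rwa [coeff_sub, coeff_sub, coeff_X_add_one_pow, hcorr, hY, sub_zero] at this

theorem babbage (p : ℕ) (hp : p.Prime) (hp5 : 5 ≤ p) (a b : ℕ) (hab : b ≤ a) :
    ((p : ℤ) ^ 2) ∣ ((Nat.choose (a * p) (b * p) : ℤ) - (Nat.choose a b : ℤ)) :=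
  babbage_general p hp a b
end

section
/- For any nonnegative integer k and any number x (in a commutative ring where the relevant denominators are invertible, e.g. the rationals), the identity ((x)_k (1-x)_k / (k!)^2) * ∑_{i=0}^{k-1} (1/(x+i) + 1/(1-x+i)) = ∑_{i=0}^{k-1} ((x)_i (1-x)_i / (i!)^2) * 1/(k-i) holds, where (a)_j = a(a+1)⋯(a+j-1) is the Pochhammer symbol. -/
/-!
Write `A k = (x)_k (1-x)_k / k!²`, `S k` for the harmonic-type sum on the left and `T k` for the
convolution on the right. Both sides satisfy the same first-order recursion
`(k+1)² X (k+1) = (x+k)(1-x+k) X k + (2k+1) A k`: for `A k * S k` because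
`(x+k)(1-x+k) (1/(x+k) + 1/(1-x+k)) = 2k+1`, and for `T k` by shifting the summation index,
using `(x+k)(1-x+k) = (x+i)(1-x+i) + (k-i)(k+1+i)` and `(k+1)² = (k+1-i)(k+1+i) + i²`.
Both vanish at `k = 0`.
-/

open Finset

namespace PochhammerHarmonic

variable {K : Type*} [Field K]

def coeff (x : K) (k : ℕ) : K :=
  (∏ j ∈ range k, (x + j)) * (∏ j ∈ range k, (1 - x + j)) / (k.factorial : K) ^ 2

def harmonicSum (x : K) (k : ℕ) : K :=
  ∑ i ∈ range k, (1 / (x + i) + 1 / (1 - x + i))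

def convolution (x : K) (k : ℕ) : K :=
  ∑ i ∈ range k, coeff x i * (1 / ((k : K) - i))

theorem harmonicSum_succ (x : K) (k : ℕ) :
    harmonicSum x (k + 1) = harmonicSum x k + (1 / (x + k) + 1 / (1 - x + k)) :=
  sum_range_succ _ _

variable [CharZero K]

theorem coeff_succ (x : K) (k : ℕ) :
    ((k : K) + 1) ^ 2 * coeff x (k + 1) = (x + k) * (1 - x + k) * coeff x k := by
  have hfact : (k.factorial : K) ≠ 0 := Nat.cast_ne_zero.2 k.factorial_ne_zero
  have hk : (k : K) + 1 ≠ 0 := Nat.cast_add_one_ne_zero k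
  rw [coeff, coeff, prod_range_succ, prod_range_succ, Nat.factorial_succ]
  push_cast
  field_simp

theorem convolution_succ (x : K) (k : ℕ) :
    ((k : K) + 1) ^ 2 * convolution x (k + 1)
      = (x + k) * (1 - x + k) * convolution x k + (2 * k + 1) * coeff x k := by
  set tail : ℕ → K := fun i => (i : K) ^ 2 * coeff x i / ((k : K) + 1 - i)
  have lhs : ((k : K) + 1) ^ 2 * convolution x (k + 1)
      = ∑ i ∈ range (k + 1), ((k : K) + 1 + i) * coeff x i + ∑ i ∈ range (k + 1), tail i := by
    rw [convolution, mul_sum, ← sum_add_distrib]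
    refine sum_congr rfl fun i hi => ?_
    have hik : (i : K) ≠ k + 1 := by exact_mod_cast (mem_range.1 hi).ne
    have hne : (k : K) + 1 - i ≠ 0 := sub_ne_zero.2 hik.symm
    simp only [tail]
    push_cast
    field_simp
    ring
  have rhs : (x + k) * (1 - x + k) * convolution x k
      = ∑ i ∈ range k, ((k : K) + 1 + i) * coeff x i + ∑ i ∈ range k, tail (i + 1) := by
    rw [convolution, mul_sum, ← sum_add_distrib]
    refine sum_congr rfl fun i hi => ?_
    have hik : (i : K) ≠ k := by exact_mod_cast (mem_range.1 hi).ne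
    have hne : (k : K) - i ≠ 0 := sub_ne_zero.2 hik.symm
    have hshift : (k : K) + 1 - ((i + 1 : ℕ) : K) = k - i := by push_cast; ring
    simp only [tail, hshift]
    field_simp
    push_cast
    linear_combination -coeff_succ x i
  have htail : ∑ i ∈ range (k + 1), tail i = ∑ i ∈ range k, tail (i + 1) := by
    simp [sum_range_succ', tail]
  rw [lhs, rhs, htail, sum_range_succ]
  ring

theorem coeff_mul_harmonicSum (x : K) (hx : ∀ j : ℕ, x + j ≠ 0) (hx' : ∀ j : ℕ, 1 - x + j ≠ 0)
    (k : ℕ) : coeff x k * harmonicSum x k = convolution x k := by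
  induction k with
  | zero => simp [harmonicSum, convolution]
  | succ k ih =>
    have hk : ((k : K) + 1) ^ 2 ≠ 0 := pow_ne_zero 2 (Nat.cast_add_one_ne_zero k)
    have hstep : (x + k) * (1 - x + k) * (1 / (x + k) + 1 / (1 - x + k)) = 2 * k + 1 := by
      field_simp [hx k, hx' k]
      ring
    refine mul_left_cancel₀ hk ?_
    rw [harmonicSum_succ]
    linear_combination (harmonicSum x k + 1 / (x + k) + 1 / (1 - x + k)) * coeff_succ x k
      + (x + k) * (1 - x + k) * ih + coeff x k * hstep - convolution_succ x k

end PochhammerHarmonic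

theorem pochhammer_harmonic_identity (k : ℕ) (x : ℚ) (hx : ∀ n : ℤ, x ≠ n) :
    ((∏ i ∈ Finset.range k, (x + i)) * (∏ i ∈ Finset.range k, (1 - x + i)) / (k.factorial : ℚ) ^ 2) *
      (∑ i ∈ Finset.range k, (1 / (x + i) + 1 / (1 - x + i)))
    = ∑ i ∈ Finset.range k,
        ((∏ j ∈ Finset.range i, (x + j)) * (∏ j ∈ Finset.range i, (1 - x + j)) / (i.factorial : ℚ) ^ 2)
          * (1 / ((k : ℚ) - i)) := by
  have hx₁ (j : ℕ) : x + j ≠ 0 := fun h => hx (-j) (by push_cast; linarith)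
  have hx₂ (j : ℕ) : 1 - x + j ≠ 0 := fun h => hx (j + 1) (by push_cast; linarith)
  exact PochhammerHarmonic.coeff_mul_harmonicSum x hx₁ hx₂ k
end

section
/- For any nonnegative integer k, ∑_{j=0}^{k-1} (1/(j+1/6) + 1/(j+5/6)) = 6*H_{6k} - 3*H_{3k} - 2*H_{2k} + H_k, where H_n is the n-th harmonic number. -/
/-!
Both sides vanish at `k = 0`, and passing from `k` to `k + 1` adds `1/(k + 1/6) + 1/(k + 5/6)`
on the left and the last `6, 3, 2, 1` reciprocals of `H_{6k+6}, H_{3k+3}, H_{2k+2}, H_{k+1}`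
on the right; these increments agree by a rational-function identity in `k`.
-/

open Finset

lemma sum_Icc_one_div_eq_harmonic (n : ℕ) : ∑ i ∈ Icc 1 n, (1 : ℚ) / i = harmonic n := by
  simp only [one_div, harmonic_eq_sum_Icc]

lemma harmonic_mul_succ (d k : ℕ) :
    harmonic (d * (k + 1)) = harmonic (d * k) + ∑ i ∈ range d, ((d * k + i + 1 : ℕ) : ℚ)⁻¹ := by
  rw [mul_add_one]
  exact sum_range_add _ _ _

lemma sixth_harmonic_step (x : ℚ) (hx : 0 ≤ x) :
    1 / (x + 1/6) + 1 / (x + 5/6)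
      = 6 * ∑ i ∈ range 6, (6 * x + i + 1)⁻¹ - 3 * ∑ i ∈ range 3, (3 * x + i + 1)⁻¹
        - 2 * ∑ i ∈ range 2, (2 * x + i + 1)⁻¹ + (x + 1)⁻¹ := by
  simp only [sum_range_succ, sum_range_zero]
  field_simp
  ring

theorem sixth_harmonic_sum (k : ℕ) :
    ∑ j ∈ Finset.range k, ((1 : ℚ) / (j + 1/6) + 1 / (j + 5/6))
    = 6 * (∑ i ∈ Finset.Icc 1 (6 * k), (1 : ℚ) / i)
      - 3 * (∑ i ∈ Finset.Icc 1 (3 * k), (1 : ℚ) / i)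
      - 2 * (∑ i ∈ Finset.Icc 1 (2 * k), (1 : ℚ) / i)
      + (∑ i ∈ Finset.Icc 1 k, (1 : ℚ) / i) := by
  simp only [sum_Icc_one_div_eq_harmonic]
  induction k with
  | zero => simp
  | succ k ih =>
    rw [sum_range_succ, ih, sixth_harmonic_step k k.cast_nonneg, harmonic_mul_succ 6,
      harmonic_mul_succ 3, harmonic_mul_succ 2, harmonic_succ]
    push_cast
    ring
end

section
/- Let p ≥ 5 be a prime and 0 ≤ k ≤ p-1 an integer. Then ((1/2)_k)^2 / (k!)^2 ≡ (-1)^k * C(⌊p/2⌋, k) * C(⌊p/2⌋+k, k) (mod p), where (a)_k is the Pochhammer symbol and the congruence is between rationals with denominators coprime to p. -/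
/-!
Write `p = 2m + 1`. Modulo `p` every odd number `2i + 1` equals both `-2 (m - i)` and
`2 (m + 1 + i)`, so `(1 · 3 ⋯ (2k - 1))² ≡ (-4)ᵏ · m(m - 1)⋯(m - k + 1) · (m + 1)⋯(m + k)`,
and the two falling factorials are `k! C(m, k)` and `k! C(m + k, k)`. Since `(1/2)_k` is
`1 · 3 ⋯ (2k - 1) / 2ᵏ`, the difference in question is an integer divisible by `p` over
`(2ᵏ k!)²`, which is prime to `p` when `k < p`.
-/

open Finset Nat

section OddProduct

variable {R : Type*} [CommRing R] {m : ℕ}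

theorem prod_two_mul_add_one_eq_neg_two_pow_mul_descFactorial (hm : (2 * m + 1 : R) = 0)
    (k : ℕ) : ∏ i ∈ range k, (2 * (i : R) + 1) = (-2) ^ k * m.descFactorial k := by
  rw [← descPochhammer_eval_eq_descFactorial, descPochhammer_eval_eq_prod_range]
  calc ∏ i ∈ range k, (2 * (i : R) + 1) = ∏ i ∈ range k, (-2) * ((m : R) - i) :=
        prod_congr rfl fun i _ => by linear_combination hm
    _ = (-2) ^ k * ∏ i ∈ range k, ((m : R) - i) := by
        rw [prod_mul_distrib, prod_const, card_range]

theorem prod_two_mul_add_one_eq_two_pow_mul_ascFactorial (hm : (2 * m + 1 : R) = 0)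
    (k : ℕ) : ∏ i ∈ range k, (2 * (i : R) + 1) = 2 ^ k * (m + 1).ascFactorial k := by
  rw [ascFactorial_eq_prod_range]
  push_cast
  calc ∏ i ∈ range k, (2 * (i : R) + 1) = ∏ i ∈ range k, 2 * ((m : R) + 1 + i) :=
        prod_congr rfl fun i _ => by linear_combination -hm
    _ = 2 ^ k * ∏ i ∈ range k, ((m : R) + 1 + i) := by
        rw [prod_mul_distrib, prod_const, card_range]

theorem sq_prod_two_mul_add_one (hm : (2 * m + 1 : R) = 0) (k : ℕ) :
    (∏ i ∈ range k, (2 * (i : R) + 1)) ^ 2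
      = (-1) ^ k * m.choose k * (m + k).choose k * (2 ^ k * k !) ^ 2 := by
  rw [sq]
  nth_rw 1 [prod_two_mul_add_one_eq_neg_two_pow_mul_descFactorial hm]
  rw [prod_two_mul_add_one_eq_two_pow_mul_ascFactorial hm, ← add_descFactorial_eq_ascFactorial,
    descFactorial_eq_factorial_mul_choose, descFactorial_eq_factorial_mul_choose, neg_pow]
  push_cast
  ring

end OddProduct

theorem prod_range_half_add {K : Type*} [Field K] (h2 : (2 : K) ≠ 0) (k : ℕ) :
    ∏ i ∈ range k, ((1 : K) / 2 + i) = (∏ i ∈ range k, (2 * (i : K) + 1)) / 2 ^ k := by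
  calc ∏ i ∈ range k, ((1 : K) / 2 + i) = ∏ i ∈ range k, (2 * (i : K) + 1) / 2 :=
        prod_congr rfl fun i _ => by field_simp; ring
    _ = (∏ i ∈ range k, (2 * (i : K) + 1)) / 2 ^ k := by
        rw [prod_div_distrib, prod_const, card_range]

theorem Rat.dvd_num_div {p N d : ℤ} (hp : Prime p) (hN : p ∣ N) (hd : ¬ p ∣ d) :
    p ∣ ((N : ℚ) / d).num := by
  have hd0 : (d : ℚ) ≠ 0 := Int.cast_ne_zero.mpr (by rintro rfl; exact hd (dvd_zero p))
  have hcross : ((N : ℚ) / d).num * d = N * ((N : ℚ) / d).den := by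
    suffices ((((N : ℚ) / d).num * d : ℤ) : ℚ) = (N * ((N : ℚ) / d).den : ℤ) from
      mod_cast this
    push_cast
    rw [← Rat.mul_den_eq_num]
    field_simp
  exact (hp.dvd_or_dvd (hcross ▸ dvd_mul_of_dvd_left hN _)).resolve_right hd

theorem Nat.Prime.not_dvd_two_pow_mul_factorial {p k : ℕ} (hp : p.Prime) (hp2 : p ≠ 2)
    (hk : k < p) : ¬ p ∣ 2 ^ k * k ! := by
  rw [hp.dvd_mul, hp.dvd_factorial, not_or, not_le]
  exact ⟨fun h => hp2 ((prime_dvd_prime_iff_eq hp prime_two).mp (hp.dvd_of_dvd_pow h)), hk⟩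

theorem pochhammer_half_cong (p : ℕ) (hp : p.Prime) (hp5 : 5 ≤ p)
    (k : ℕ) (hk : k ≤ p - 1) :
    (p : ℤ) ∣
      (((∏ i ∈ Finset.range k, ((1 : ℚ) / 2 + i)) ^ 2 / (k.factorial : ℚ) ^ 2)
        - (-1 : ℚ) ^ k * (Nat.choose (p / 2) k : ℚ) * (Nat.choose (p / 2 + k) k : ℚ)).num := by
  have hp2 : p ≠ 2 := by omega
  set m := p / 2
  have hm : 2 * m + 1 = p := two_mul_div_two_add_one_of_odd (hp.odd_of_ne_two hp2)
  set Z : ℤ := ∏ i ∈ range k, (2 * (i : ℤ) + 1)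
  have hdiff : (∏ i ∈ range k, ((1 : ℚ) / 2 + i)) ^ 2 / (k ! : ℚ) ^ 2
        - (-1) ^ k * (m.choose k : ℚ) * ((m + k).choose k : ℚ)
      = ((Z ^ 2 - (-1) ^ k * m.choose k * (m + k).choose k * (2 ^ k * k !) ^ 2 : ℤ) : ℚ)
        / ((2 ^ k * k ! : ℕ) ^ 2 : ℤ) := by
    rw [prod_range_half_add two_ne_zero]
    push_cast [Z]
    field_simp
  rw [hdiff]
  refine Rat.dvd_num_div (Nat.prime_iff_prime_int.mp hp) ?_ ?_
  · rw [← ZMod.intCast_zmod_eq_zero_iff_dvd]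
    have hm' : (2 * m + 1 : ZMod p) = 0 := by
      exact_mod_cast (ZMod.natCast_eq_zero_iff (2 * m + 1) p).mpr (dvd_of_eq hm.symm)
    push_cast [Z]
    rw [sq_prod_two_mul_add_one hm', sub_self]
  · rw [← Int.natCast_pow, Int.natCast_dvd_natCast]
    exact fun h => hp.not_dvd_two_pow_mul_factorial hp2 (by omega) (hp.dvd_of_dvd_pow h)
end

section
/- Let p ≥ 5 be a prime and x any p-adic integer. Then ∑_{k=0}^{p-1} (x)_k (1-x)_k / (k!)^2 ≡ (-1)^{⟨-x⟩_p} (mod p^2) in the p-adic integers, where ⟨a⟩_p denotes the least nonnegative residue of a modulo p and (a)_k is the rising factorial. -/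
open Finset

section Helpers
variable {p : ℕ} [hp : Fact p.Prime]

/-- Rising factorial as a product in `ℚ_[p]`. -/
noncomputable def RF (a : ℚ_[p]) (k : ℕ) : ℚ_[p] := ∏ i ∈ Finset.range k, (a + i)

@[simp] lemma RF_zero (a : ℚ_[p]) : RF a 0 = 1 := by simp [RF]

lemma RF_succ (a : ℚ_[p]) (k : ℕ) : RF a (k+1) = RF a k * (a + k) := by
  simp [RF, Finset.prod_range_succ]

lemma RF_succ' (a : ℚ_[p]) (k : ℕ) : RF a (k+1) = a * RF (a+1) k := by
  rw [RF, Finset.prod_range_succ']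
  rw [mul_comm]
  congr 1
  · push_cast; ring
  · exact Finset.prod_congr rfl (fun i _ => by push_cast; ring)

lemma norm_nat_le_one (n : ℕ) : ‖(n : ℚ_[p])‖ ≤ 1 := by
  have := Padic.norm_int_le_one (p := p) (n : ℤ)
  push_cast at this
  exact this

lemma norm_RF_le_one {a : ℚ_[p]} (ha : ‖a‖ ≤ 1) (k : ℕ) : ‖RF a k‖ ≤ 1 := by
  induction k with
  | zero => simp
  | succ n ih =>
    rw [RF_succ, norm_mul]
    have h1 : ‖a + (n:ℚ_[p])‖ ≤ 1 :=
      le_trans (Padic.nonarchimedean _ _) (max_le ha (norm_nat_le_one n))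
    calc ‖RF a n‖ * ‖a + (n:ℚ_[p])‖ ≤ 1 * 1 :=
          mul_le_mul ih h1 (norm_nonneg _) zero_le_one
      _ = 1 := by ring

lemma norm_RF_sub_le {a b : ℚ_[p]} (ha : ‖a‖ ≤ 1) (hb : ‖b‖ ≤ 1) (k : ℕ) :
    ‖RF a k - RF b k‖ ≤ ‖a - b‖ := by
  induction k with
  | zero => simp
  | succ n ih =>
    have key : RF a (n+1) - RF b (n+1)
        = (RF a n - RF b n) * (a + n) + RF b n * (a - b) := by
      rw [RF_succ, RF_succ]; ring
    rw [key]
    refine le_trans (Padic.nonarchimedean _ _) (max_le ?_ ?_)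
    · rw [norm_mul]
      have h1 : ‖a + (n:ℚ_[p])‖ ≤ 1 :=
        le_trans (Padic.nonarchimedean _ _) (max_le ha (norm_nat_le_one n))
      calc ‖RF a n - RF b n‖ * ‖a + (n:ℚ_[p])‖ ≤ ‖a - b‖ * 1 :=
            mul_le_mul ih h1 (norm_nonneg _) (norm_nonneg _)
        _ = ‖a - b‖ := by ring
    · rw [norm_mul]
      calc ‖RF b n‖ * ‖a - b‖ ≤ 1 * ‖a - b‖ :=
            mul_le_mul_of_nonneg_right (norm_RF_le_one hb n) (norm_nonneg _)
        _ = ‖a - b‖ := by ring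

lemma sun_norm_sum_le {α : Type*} {s : Finset α} {f : α → ℚ_[p]} {C : ℝ} (hC : 0 ≤ C)
    (h : ∀ i ∈ s, ‖f i‖ ≤ C) : ‖∑ i ∈ s, f i‖ ≤ C := by
  induction s using Finset.cons_induction with
  | empty => simpa using hC
  | cons a s ha ih =>
    rw [Finset.sum_cons]
    refine le_trans (Padic.nonarchimedean _ _) (max_le ?_ ?_)
    · exact h a (Finset.mem_cons_self a s)
    · exact ih (fun i hi => h i (Finset.mem_cons_of_mem hi))

lemma sun_norm_prod_le_one {α : Type*} {s : Finset α} {f : α → ℚ_[p]}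
    (h : ∀ i ∈ s, ‖f i‖ ≤ 1) : ‖∏ i ∈ s, f i‖ ≤ 1 := by
  induction s using Finset.cons_induction with
  | empty => simp
  | cons a s ha ih =>
    rw [Finset.prod_cons, norm_mul]
    calc ‖f a‖ * ‖∏ i ∈ s, f i‖ ≤ 1 * 1 :=
          mul_le_mul (h a (Finset.mem_cons_self a s))
            (ih (fun i hi => h i (Finset.mem_cons_of_mem hi))) (norm_nonneg _) zero_le_one
      _ = 1 := by ring

lemma sun_norm_prod_le_single {α : Type*} {s : Finset α} {f : α → ℚ_[p]} {j : α} {ε : ℝ}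
    (hj : j ∈ s) (hje : ‖f j‖ ≤ ε) (h : ∀ i ∈ s, ‖f i‖ ≤ 1) : ‖∏ i ∈ s, f i‖ ≤ ε := by
  classical
  rw [← Finset.mul_prod_erase s f hj, norm_mul]
  calc ‖f j‖ * ‖∏ i ∈ s.erase j, f i‖ ≤ ε * 1 :=
        mul_le_mul hje (sun_norm_prod_le_one (fun i hi => h i (Finset.mem_of_mem_erase hi)))
          (norm_nonneg _) (le_trans (norm_nonneg _) hje)
    _ = ε := by ring

end Helpers

section Main
variable {p : ℕ} [hp : Fact p.Prime]

lemma sun_key (y : ℚ_[p]) (n : ℕ) :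
    ∑ k ∈ Finset.range (n+1),
        (RF y k * RF (1-y) k + RF (y+1) k * RF (-y) k) / ((k.factorial : ℚ_[p]))^2
      = 2 * (RF (1-y) n * RF (y+1) n) / ((n.factorial : ℚ_[p]))^2 := by
  induction n with
  | zero => simp; norm_num
  | succ n ih =>
    rw [Finset.sum_range_succ, ih]
    have h1 : RF y (n+1) = y * RF (y+1) n := RF_succ' y n
    have h2 : RF (-y) (n+1) = (-y) * RF (1-y) n := by
      rw [RF_succ', neg_add_eq_sub]
    have h3 : RF (1-y) (n+1) = RF (1-y) n * (1-y+(n:ℚ_[p])) := RF_succ _ n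
    have h4 : RF (y+1) (n+1) = RF (y+1) n * (y+1+(n:ℚ_[p])) := RF_succ _ n
    have hfac : (((n+1).factorial : ℚ_[p])) = ((n:ℚ_[p])+1) * (n.factorial : ℚ_[p]) := by
      rw [Nat.factorial_succ]; push_cast; ring
    have hf0 : ((n.factorial : ℚ_[p])) ≠ 0 := by
      exact_mod_cast Nat.cast_ne_zero.mpr n.factorial_ne_zero
    have hn0 : ((n:ℚ_[p])+1) ≠ 0 := Nat.cast_add_one_ne_zero n
    rw [h1, h2, h3, h4, hfac]
    field_simp
    ring

lemma sun_norm_nat_eq_one {m : ℕ} (hm0 : 0 < m) (hmp : m < p) : ‖(m : ℚ_[p])‖ = 1 := by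
  refine le_antisymm (norm_nat_le_one m) ?_
  by_contra hlt
  push_neg at hlt
  have h1 : ‖((m : ℤ) : ℚ_[p])‖ < 1 := by push_cast; exact hlt
  rw [Padic.norm_intCast_lt_one_iff, Int.natCast_dvd_natCast] at h1
  have := Nat.le_of_dvd hm0 h1
  omega

lemma sun_norm_fact_eq_one {k : ℕ} (hk : k < p) : ‖((k.factorial : ℚ_[p]))‖ = 1 := by
  refine le_antisymm (norm_nat_le_one _) ?_
  by_contra hlt
  push_neg at hlt
  have h1 : ‖((k.factorial : ℤ) : ℚ_[p])‖ < 1 := by push_cast; exact hlt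
  rw [Padic.norm_intCast_lt_one_iff, Int.natCast_dvd_natCast,
    hp.out.dvd_factorial] at h1
  omega

lemma RF_one_eq (k : ℕ) : RF (1 : ℚ_[p]) k = (k.factorial : ℚ_[p]) := by
  induction k with
  | zero => simp
  | succ n ih =>
    rw [RF_succ, ih, Nat.factorial_succ]
    push_cast; ring

/-- harmonic sum bound -/
lemma sun_harmonic (hp5 : 5 ≤ p) :
    ‖∑ i ∈ Finset.range (p-1), (((i+1 : ℕ)) : ℚ_[p])⁻¹‖ ≤ (p:ℝ)⁻¹ := by
  set n := p - 1 with hn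
  have hpn : n + 1 = p := by have := hp.out.two_le; omega
  have hrefl : ∑ i ∈ Finset.range n, (((i+1 : ℕ)) : ℚ_[p])⁻¹
      = ∑ i ∈ Finset.range n, (((n-i : ℕ)) : ℚ_[p])⁻¹ := by
    rw [← Finset.sum_range_reflect]
    refine Finset.sum_congr rfl (fun i hi => ?_)
    rw [Finset.mem_range] at hi
    congr 2
    omega
  have h2 : (2:ℚ_[p]) * ∑ i ∈ Finset.range n, (((i+1 : ℕ)) : ℚ_[p])⁻¹
      = ∑ i ∈ Finset.range n, ((p : ℚ_[p]) / (((i+1:ℕ)) * ((n-i:ℕ)))) := by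
    rw [two_mul]
    nth_rewrite 2 [hrefl]
    rw [← Finset.sum_add_distrib]
    refine Finset.sum_congr rfl (fun i hi => ?_)
    rw [Finset.mem_range] at hi
    have ha : (((i+1:ℕ)) : ℚ_[p]) ≠ 0 := Nat.cast_ne_zero.mpr (by omega)
    have hb : (((n-i:ℕ)) : ℚ_[p]) ≠ 0 := Nat.cast_ne_zero.mpr (by omega)
    have hsum : (((i+1:ℕ)) : ℚ_[p]) + ((n-i:ℕ) : ℚ_[p]) = (p : ℚ_[p]) := by
      rw [← Nat.cast_add]
      congr 1
      omega
    rw [inv_add_inv ha hb, hsum]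
  have hbound : ‖(2:ℚ_[p]) * ∑ i ∈ Finset.range n, (((i+1 : ℕ)) : ℚ_[p])⁻¹‖ ≤ (p:ℝ)⁻¹ := by
    rw [h2]
    refine sun_norm_sum_le (by positivity) (fun i hi => ?_)
    rw [Finset.mem_range] at hi
    rw [norm_div, norm_mul, Padic.norm_p,
      sun_norm_nat_eq_one (by omega) (by omega), sun_norm_nat_eq_one (by omega) (by omega)]
    simp
  have h2norm : ‖(2:ℚ_[p])‖ = 1 := by
    have : ((2:ℕ) : ℚ_[p]) = (2 : ℚ_[p]) := by push_cast; ring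
    rw [← this]
    exact sun_norm_nat_eq_one (by omega) (by omega)
  rwa [norm_mul, h2norm, one_mul] at hbound

end Main

section Main2
variable {p : ℕ} [hp : Fact p.Prime]

noncomputable def Sfun (p : ℕ) [Fact p.Prime] (y : ℚ_[p]) : ℚ_[p] :=
  ∑ k ∈ Finset.range p, RF y k * RF (1-y) k / ((k.factorial : ℚ_[p]))^2

lemma sun_nonarch_sub (a b : ℚ_[p]) : ‖a - b‖ ≤ max ‖a‖ ‖b‖ := by
  rw [sub_eq_add_neg]
  refine le_trans (Padic.nonarchimedean _ _) ?_
  simp [norm_neg]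

lemma sun_base (hp5 : 5 ≤ p) {y : ℚ_[p]} (hy : ‖y‖ ≤ (p:ℝ)⁻¹) :
    ‖Sfun p y - 1‖ ≤ (p:ℝ)⁻¹ * (p:ℝ)⁻¹ := by
  have hp0 : (0:ℝ) < p := by
    have : 0 < p := hp.out.pos
    exact_mod_cast this
  have hpinv1 : (p:ℝ)⁻¹ ≤ 1 := by
    rw [inv_le_one_iff₀]
    right
    exact_mod_cast hp.out.one_le
  have hpinv0 : (0:ℝ) ≤ (p:ℝ)⁻¹ := by positivity
  have hy1 : ‖y‖ ≤ 1 := le_trans hy hpinv1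
  have hpn : p - 1 + 1 = p := by have := hp.out.two_le; omega
  have hsplit : Sfun p y - 1 = ∑ i ∈ Finset.range (p-1),
      y * (RF (y+1) i * RF (1-y) (i+1) / (((i+1).factorial : ℚ_[p]))^2) := by
    have hs := Finset.sum_range_succ'
      (fun k => RF y k * RF (1-y) k / ((k.factorial : ℚ_[p]))^2) (p-1)
    rw [hpn] at hs
    rw [Sfun, hs]
    simp only [RF_zero, one_mul, Nat.factorial_zero, Nat.cast_one, one_pow, div_one]
    rw [add_sub_cancel_right]
    refine Finset.sum_congr rfl fun i _ => ?_
    rw [RF_succ']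
    ring
  rw [hsplit, ← Finset.mul_sum, norm_mul]
  have hyp1 : ‖y + 1‖ ≤ 1 :=
    le_trans (Padic.nonarchimedean _ _) (by simp [hy1])
  have h1y : ‖1 - y‖ ≤ 1 :=
    le_trans (sun_nonarch_sub _ _) (by simp [hy1])
  have hV : ‖∑ i ∈ Finset.range (p-1),
      RF (y+1) i * RF (1-y) (i+1) / (((i+1).factorial : ℚ_[p]))^2‖ ≤ (p:ℝ)⁻¹ := by
    set V := ∑ i ∈ Finset.range (p-1),
      RF (y+1) i * RF (1-y) (i+1) / (((i+1).factorial : ℚ_[p]))^2 with hVdef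
    set H := ∑ i ∈ Finset.range (p-1), (((i+1 : ℕ)) : ℚ_[p])⁻¹ with hHdef
    have hVH : ‖V - H‖ ≤ (p:ℝ)⁻¹ := by
      rw [hVdef, hHdef, ← Finset.sum_sub_distrib]
      refine sun_norm_sum_le hpinv0 (fun i hi => ?_)
      rw [Finset.mem_range] at hi
      have hi1p : i + 1 < p := by omega
      have hd : (((i+1 : ℕ)) : ℚ_[p])⁻¹
          = RF (1:ℚ_[p]) i * RF 1 (i+1) / (((i+1).factorial : ℚ_[p]))^2 := by
        rw [RF_one_eq, RF_one_eq, Nat.factorial_succ]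
        have h1 : ((i.factorial : ℚ_[p])) ≠ 0 :=
          Nat.cast_ne_zero.mpr i.factorial_ne_zero
        have h2 : (((i+1:ℕ)) : ℚ_[p]) ≠ 0 := Nat.cast_ne_zero.mpr (by omega)
        push_cast
        push_cast at h2
        field_simp
      rw [hd, div_sub_div_same, norm_div, norm_pow, sun_norm_fact_eq_one hi1p,
        one_pow, div_one]
      have hdiff : RF (y+1) i * RF (1-y) (i+1) - RF (1:ℚ_[p]) i * RF 1 (i+1)
          = (RF (y+1) i - RF 1 i) * RF (1-y) (i+1) + RF (1:ℚ_[p]) i * (RF (1-y) (i+1) - RF 1 (i+1)) := by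
        ring
      rw [hdiff]
      refine le_trans (Padic.nonarchimedean _ _) (max_le ?_ ?_)
      · rw [norm_mul]
        have ha : ‖RF (y+1) i - RF 1 i‖ ≤ ‖y‖ := by
          have := norm_RF_sub_le hyp1 (le_of_eq norm_one) i
          simpa using this
        calc ‖RF (y+1) i - RF 1 i‖ * ‖RF (1-y) (i+1)‖ ≤ ‖y‖ * 1 :=
              mul_le_mul ha (norm_RF_le_one h1y _) (norm_nonneg _) (norm_nonneg _)
          _ = ‖y‖ := by ring
          _ ≤ (p:ℝ)⁻¹ := hy
      · rw [norm_mul]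
        have hb : ‖RF (1-y) (i+1) - RF 1 (i+1)‖ ≤ ‖y‖ := by
          have := norm_RF_sub_le h1y (le_of_eq norm_one) (i+1)
          have he : (1 - y) - 1 = -y := by ring
          rw [he, norm_neg] at this
          exact this
        calc ‖RF (1:ℚ_[p]) i‖ * ‖RF (1-y) (i+1) - RF 1 (i+1)‖ ≤ 1 * ‖y‖ :=
              mul_le_mul (norm_RF_le_one (le_of_eq norm_one) _) hb (norm_nonneg _) zero_le_one
          _ = ‖y‖ := by ring
          _ ≤ (p:ℝ)⁻¹ := hy
    have hVsplit : V = (V - H) + H := by ring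
    rw [hVsplit]
    exact le_trans (Padic.nonarchimedean _ _) (max_le hVH (sun_harmonic hp5))
  exact mul_le_mul hy hV (norm_nonneg _) hpinv0

end Main2

section Main3
variable {p : ℕ} [hp : Fact p.Prime]

lemma sun_step (hp5 : 5 ≤ p) {y : ℚ_[p]} {s : ℕ} (hs1 : 1 ≤ s) (hs2 : s ≤ p - 1)
    (hy1 : ‖y‖ ≤ 1) (hys : ‖y - s‖ ≤ (p:ℝ)⁻¹) :
    ‖Sfun p y + Sfun p (y+1)‖ ≤ (p:ℝ)⁻¹ * (p:ℝ)⁻¹ := by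
  have hpn : p - 1 + 1 = p := by omega
  have hpinv0 : (0:ℝ) ≤ (p:ℝ)⁻¹ := by positivity
  have hid : Sfun p y + Sfun p (y+1)
      = 2 * (RF (1-y) (p-1) * RF (y+1) (p-1)) / (((p-1).factorial : ℚ_[p]))^2 := by
    have hk := sun_key y (p-1)
    rw [hpn] at hk
    rw [Sfun, Sfun, ← Finset.sum_add_distrib, ← hk]
    refine Finset.sum_congr rfl fun k _ => ?_
    have hneg : (1:ℚ_[p]) - (y+1) = -y := by ring
    rw [hneg, ← add_div]
  have honefacts : ∀ i : ℕ, ‖1 - y + (i:ℚ_[p])‖ ≤ 1 := fun i =>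
    le_trans (Padic.nonarchimedean _ _)
      (max_le (le_trans (sun_nonarch_sub _ _) (by simp [hy1])) (norm_nat_le_one i))
  have hyfacts : ∀ i : ℕ, ‖y + 1 + (i:ℚ_[p])‖ ≤ 1 := fun i =>
    le_trans (Padic.nonarchimedean _ _)
      (max_le (le_trans (Padic.nonarchimedean _ _) (by simp [hy1])) (norm_nat_le_one i))
  have hA : ‖RF (1-y) (p-1)‖ ≤ (p:ℝ)⁻¹ := by
    rw [RF]
    refine sun_norm_prod_le_single (j := s - 1) (Finset.mem_range.mpr (by omega)) ?_
      (fun i _ => honefacts i)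
    have hc : ((s - 1 : ℕ) : ℚ_[p]) = (s : ℚ_[p]) - 1 := by
      rw [Nat.cast_sub hs1, Nat.cast_one]
    rw [hc, show (1 : ℚ_[p]) - y + ((s:ℚ_[p]) - 1) = -(y - s) by ring, norm_neg]
    exact hys
  have hB : ‖RF (y+1) (p-1)‖ ≤ (p:ℝ)⁻¹ := by
    rw [RF]
    refine sun_norm_prod_le_single (j := p - 1 - s) (Finset.mem_range.mpr (by omega)) ?_
      (fun i _ => hyfacts i)
    have hnat : (p - 1 - s) + (s + 1) = p := by omega
    have hc : ((p - 1 - s : ℕ) : ℚ_[p]) = (p:ℚ_[p]) - (s:ℚ_[p]) - 1 := by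
      have := congrArg (fun m : ℕ => (m : ℚ_[p])) hnat
      push_cast at this
      linear_combination this
    rw [hc, show y + 1 + ((p:ℚ_[p]) - (s:ℚ_[p]) - 1) = (y - s) + p by ring]
    refine le_trans (Padic.nonarchimedean _ _) (max_le hys ?_)
    rw [Padic.norm_p]
  have h2 : ‖(2:ℚ_[p])‖ = 1 := by
    have he : ((2:ℕ) : ℚ_[p]) = (2 : ℚ_[p]) := by push_cast; ring
    rw [← he]
    exact sun_norm_nat_eq_one (by omega) (by omega)
  rw [hid, norm_div, norm_mul, norm_mul, h2, one_mul, norm_pow,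
    sun_norm_fact_eq_one (by omega), one_pow, div_one]
  exact mul_le_mul hA hB (norm_nonneg _) hpinv0

lemma sun_ind (hp5 : 5 ≤ p) : ∀ m, m ≤ p - 1 → ∀ y : ℚ_[p], ‖y‖ ≤ 1 →
    ‖y + (m:ℚ_[p])‖ ≤ (p:ℝ)⁻¹ →
    ‖Sfun p y - (-1:ℚ_[p])^m‖ ≤ (p:ℝ)⁻¹ * (p:ℝ)⁻¹ := by
  intro m
  induction m with
  | zero =>
    intro _ y hy1 hym
    have : ‖y‖ ≤ (p:ℝ)⁻¹ := by simpa using hym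
    simpa using sun_base hp5 this
  | succ m ih =>
    intro hm y hy1 hym
    have hy1' : ‖y + 1‖ ≤ 1 :=
      le_trans (Padic.nonarchimedean _ _) (by simp [hy1])
    have hcast : (y + 1) + (m:ℚ_[p]) = y + ((m+1 : ℕ):ℚ_[p]) := by push_cast; ring
    have h1 : ‖Sfun p (y+1) - (-1:ℚ_[p])^m‖ ≤ (p:ℝ)⁻¹ * (p:ℝ)⁻¹ := by
      refine ih (by omega) (y+1) hy1' ?_
      rw [hcast]
      exact hym
    have hs1 : 1 ≤ p - 1 - m := by omega
    have h2 : ‖Sfun p y + Sfun p (y+1)‖ ≤ (p:ℝ)⁻¹ * (p:ℝ)⁻¹ := by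
      refine sun_step hp5 hs1 (by omega) hy1 ?_
      have hnat : (p - 1 - m) + (m + 1) = p := by omega
      have hc : ((p - 1 - m : ℕ) : ℚ_[p]) = (p:ℚ_[p]) - ((m+1:ℕ):ℚ_[p]) := by
        have := congrArg (fun m : ℕ => (m : ℚ_[p])) hnat
        push_cast at this
        push_cast
        linear_combination this
      rw [hc, show y - ((p:ℚ_[p]) - ((m+1:ℕ):ℚ_[p])) = (y + ((m+1:ℕ):ℚ_[p])) - p by ring]
      refine le_trans (sun_nonarch_sub _ _) (max_le hym ?_)
      rw [Padic.norm_p]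
    have hrw : Sfun p y - (-1:ℚ_[p])^(m+1)
        = (Sfun p y + Sfun p (y+1)) - (Sfun p (y+1) - (-1:ℚ_[p])^m) := by
      rw [pow_succ]
      ring
    rw [hrw]
    exact le_trans (sun_nonarch_sub _ _) (max_le h2 h1)

end Main3

theorem sun_supercongruence (p : ℕ) [Fact p.Prime] (hp5 : 5 ≤ p) (x : ℤ_[p]) :
    ‖(∑ k ∈ Finset.range p,
        (∏ i ∈ Finset.range k, ((x : ℚ_[p]) + i)) *
          (∏ i ∈ Finset.range k, (1 - (x : ℚ_[p]) + i)) / (k.factorial : ℚ_[p]) ^ 2)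
      - (-1 : ℚ_[p]) ^ ((PadicInt.toZMod (-x)).val)‖ ≤ (p : ℝ) ^ (-2 : ℤ) := by
  have hp := (inferInstance : Fact p.Prime)
  haveI : NeZero p := ⟨hp.out.ne_zero⟩
  set r := (PadicInt.toZMod (-x)).val with hrdef
  have hr : r < p := ZMod.val_lt _
  have hp0 : (p:ℝ) ≠ 0 := by
    have : 0 < p := hp.out.pos
    positivity
  have h1 : ‖(-x) - ((r : ℕ) : ℤ_[p])‖ ≤ (p:ℝ) ^ (-(1:ℕ) : ℤ) := by
    rw [PadicInt.norm_le_pow_iff_mem_span_pow, pow_one, ← PadicInt.maximalIdeal_eq_span_p]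
    have hspec := PadicInt.toZMod_spec (-x)
    rwa [← ZMod.natCast_val (PadicInt.toZMod (-x))] at hspec
  have h4 : ‖x + ((r:ℕ):ℤ_[p])‖ ≤ (p:ℝ)⁻¹ := by
    rw [show x + ((r:ℕ):ℤ_[p]) = -((-x) - ((r:ℕ):ℤ_[p])) by ring, norm_neg]
    calc ‖(-x) - ((r : ℕ) : ℤ_[p])‖ ≤ (p:ℝ) ^ (-(1:ℕ) : ℤ) := h1
      _ = (p:ℝ)⁻¹ := by
        push_cast
        rw [zpow_neg_one]
  have h2 : ‖((x:ℚ_[p])) + ((r:ℕ):ℚ_[p])‖ ≤ (p:ℝ)⁻¹ := by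
    have h5 : (((x + ((r:ℕ):ℤ_[p])) : ℤ_[p]) : ℚ_[p]) = (x:ℚ_[p]) + ((r:ℕ):ℚ_[p]) := by
      push_cast
      rfl
    rw [← h5, ← PadicInt.norm_def]
    exact h4
  have hx1 : ‖(x:ℚ_[p])‖ ≤ 1 := by
    rw [← PadicInt.norm_def]
    exact PadicInt.norm_le_one x
  have hmain := sun_ind hp5 r (by omega) (x:ℚ_[p]) hx1 h2
  have hfinal : ((p:ℝ)) ^ (-2:ℤ) = (p:ℝ)⁻¹ * (p:ℝ)⁻¹ := by
    rw [show (-2:ℤ) = (-1) + (-1) by norm_num, zpow_add₀ hp0, zpow_neg_one]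
  rw [hfinal]
  exact hmain
end
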